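/- arXiv:2301.13206 — 9 statements merged into one kernel-verified Lean document; each statement's English description precedes it below -/
import Mathlib

section
/- Let A be a coherent integral domain and let M be a finitely presented A-module. Then the canonical double-dual map φ_M : M → M^∨∨ = Hom_A(Hom_A(M,A),A) is injective if and only if M is torsion-free. -/
/-!
Every double dual is torsion-free, so `M` is torsion-free as soon as it embeds into `M^∨∨`.
Conversely, a torsion-free `M` embeds into its localization `K ⊗ M` for `K = Frac A`, where a
`K`-linear form separates any given nonzero vector; since `M` is finitely generated, multiplying
that form by a common denominator of its values on the generators gives an `A`-valued form.
-/

open CategoryTheory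

/-- A ring is *coherent* if every finitely generated ideal is finitely presented. -/
def IsCoherentRing (A : Type) [CommRing A] : Prop :=
  ∀ I : Ideal A, I.FG → Module.FinitePresentation A I

open Module

section

variable {A M : Type*} [CommRing A] [AddCommGroup M] [Module A M]

theorem noZeroSMulDivisors_of_injective_dual_eval [NoZeroDivisors A]
    (h : Function.Injective (Dual.eval A M)) : NoZeroSMulDivisors A M := by
  rw [noZeroSMulDivisors_iff_right_eq_zero_of_smul]
  intro a ha m ham
  apply h
  ext f
  have : a * f m = 0 := by rw [← smul_eq_mul, ← map_smul, ham, map_zero]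
  simp [(mul_eq_zero.mp this).resolve_left ha]

theorem exists_dual_algebraMap_eq_smul {K : Type*} [CommRing K] [Algebra A K]
    [IsFractionRing A K] [Module.Finite A M] (φ : M →ₗ[A] K) :
    ∃ b ∈ nonZeroDivisors A, ∃ f : Dual A M, ∀ x, algebraMap A K (f x) = b • φ x := by
  obtain ⟨s, hs⟩ := Module.Finite.fg_top (R := A) (M := M)
  obtain ⟨b, hb⟩ := IsLocalization.exist_integer_multiples (nonZeroDivisors A) s φ
  have hint : ∀ x, (b : A) • φ x ∈ LinearMap.range (Algebra.linearMap A K) := by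
    have : Submodule.span A (s : Set M) ≤
        (LinearMap.range (Algebra.linearMap A K)).comap ((b : A) • φ) :=
      Submodule.span_le.mpr fun x hx => hb x hx
    exact fun x => this (hs ▸ Submodule.mem_top)
  let e := LinearEquiv.ofInjective (Algebra.linearMap A K) (IsFractionRing.injective A K)
  refine ⟨b, b.2, e.symm.toLinearMap ∘ₗ ((b : A) • φ).codRestrict _ hint, fun x => ?_⟩
  exact congrArg Subtype.val (e.apply_symm_apply ⟨_, hint x⟩)

theorem exists_dual_apply_ne_zero [IsDomain A] [Module.Finite A M] [NoZeroSMulDivisors A M]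
    {m : M} (hm : m ≠ 0) : ∃ f : Dual A M, f m ≠ 0 := by
  let ι := LocalizedModule.mkLinearMap (nonZeroDivisors A) M
  have hι : Function.Injective ι :=
    (IsLocalizedModule.injective_iff_isRegular _ ι).mpr fun c =>
      IsSMulRegular.of_ne_zero (nonZeroDivisors.ne_zero c.2)
  obtain ⟨g, hg⟩ := Projective.exists_dual_ne_zero (FractionRing A)
    ((map_ne_zero_iff ι hι).mpr hm)
  obtain ⟨b, hb, f, hf⟩ := exists_dual_algebraMap_eq_smul (g.restrictScalars A ∘ₗ ι)
  refine ⟨f, fun hfm => ?_⟩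
  have : algebraMap A (FractionRing A) b * g (ι m) = 0 := by
    rw [← Algebra.smul_def]
    exact (hf m).symm.trans (by rw [hfm, map_zero])
  exact hg ((mul_eq_zero.mp this).resolve_left
    (IsFractionRing.to_map_ne_zero_of_mem_nonZeroDivisors hb))

end

theorem stmt_1_general (A : Type) [CommRing A] [IsDomain A]
    (M : Type) [AddCommGroup M] [Module A M] [Module.FinitePresentation A M] :
    Function.Injective (Module.Dual.eval A M) ↔ NoZeroSMulDivisors A M := by
  refine ⟨noZeroSMulDivisors_of_injective_dual_eval, fun _ => ?_⟩
  refine (injective_iff_map_eq_zero _).mpr fun m hm => by_contra fun hne => ?_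
  obtain ⟨f, hf⟩ := exists_dual_apply_ne_zero (A := A) hne
  exact hf (LinearMap.congr_fun hm f)

/-- Over a coherent domain, for a finitely presented module `M` the canonical map to the
double dual is injective iff `M` is torsion-free. -/
theorem stmt_1 (A : Type) [CommRing A] [IsDomain A] (hA : IsCoherentRing A)
    (M : Type) [AddCommGroup M] [Module A M] [Module.FinitePresentation A M] :
    Function.Injective (Module.Dual.eval A M) ↔ NoZeroSMulDivisors A M :=
  stmt_1_general A M
end

section
/- Let A be a coherent integral domain and M a finitely presented A-module. Then M is reflexive (i.e., the canonical map M → M^∨∨ is an isomorphism) if and only if there exists an exact sequence 0 → M → A^m → A^n of A-modules for some natural numbers m, n (i.e., M is finitely copresented). -/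
open Module LinearMap

def Module.FinitelyCopresented (A M : Type*) [CommRing A] [AddCommGroup M] [Module A M] : Prop :=
  ∃ (m n : ℕ) (f : M →ₗ[A] (Fin m → A)) (g : (Fin m → A) →ₗ[A] (Fin n → A)),
    Function.Injective f ∧ Function.Exact f g

section Dual

variable {A M N P : Type*} [CommRing A] [AddCommGroup M] [Module A M]
  [AddCommGroup N] [Module A N] [AddCommGroup P] [Module A P]

theorem Function.Exact.dualMap_of_surjective {p : P →ₗ[A] N} {q : N →ₗ[A] M}
    (h : Function.Exact p q) (hq : Function.Surjective q) :
    Function.Exact q.dualMap p.dualMap := by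
  rw [LinearMap.exact_iff, ker_dualMap_eq_dualAnnihilator_range, ← h.linearMap_ker_eq,
    range_dualMap_eq_dualAnnihilator_ker_of_surjective q hq]

theorem Module.FinitelyCopresented.of_linearEquiv (e : M ≃ₗ[A] N)
    (hN : FinitelyCopresented A N) : FinitelyCopresented A M := by
  obtain ⟨m, n, f, g, hf, hfg⟩ := hN
  exact ⟨m, n, f ∘ₗ e, g, hf.comp e.injective, e.precomp_exact_iff_exact.mpr hfg⟩

theorem Module.finitelyCopresented_dual [FinitePresentation A M] :
    FinitelyCopresented A (Dual A M) := by
  obtain ⟨m, n, q, p, hq, hpq⟩ := FinitePresentation.exists_fin' A M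
  let eₘ := LinearEquiv.piRing A A (Fin m) A
  let eₙ := LinearEquiv.piRing A A (Fin n) A
  refine ⟨m, n, eₘ ∘ₗ q.dualMap, eₙ ∘ₗ p.dualMap ∘ₗ eₘ.symm,
    eₘ.injective.comp (dualMap_injective_of_surjective hq), ?_⟩
  refine Function.Exact.of_ladder_linearEquiv_of_exact (e₁ := LinearEquiv.refl A _)
    (e₂ := eₘ) (e₃ := eₙ) rfl ?_ (hpq.dualMap_of_surjective hq)
  ext; simp

end Dual

theorem LinearMap.injective_funLeft_castSucc_comp_subtype_ker {A M : Type*} [CommRing A]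
    [AddCommGroup M] [Module A M] {m : ℕ} {f : M →ₗ[A] (Fin (m + 1) → A)}
    (hf : Function.Injective f) :
    Function.Injective (funLeft A A Fin.castSucc ∘ₗ f ∘ₗ
      (ker (proj (Fin.last m) ∘ₗ f)).subtype) := by
  intro x y hxy
  apply Subtype.ext (hf (funext fun i => ?_))
  induction i using Fin.lastCases with
  | last => exact x.2.trans y.2.symm
  | cast i => exact congrFun hxy i

namespace IsCoherentRing

variable {A : Type} [CommRing A] (hA : IsCoherentRing A)
include hA

theorem finitePresentation_of_fg :
    ∀ {m : ℕ} (N : Submodule A (Fin m → A)), N.FG → FinitePresentation A N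
  | 0, N, _ => inferInstance
  | m + 1, N, hN => by
    have : Module.Finite A N := Module.Finite.iff_fg.mpr hN
    let ℓ : N →ₗ[A] A := proj (Fin.last m) ∘ₗ N.subtype
    have : FinitePresentation A (range ℓ) := hA _ (Submodule.fg_range ℓ)
    have hK : (ker ℓ).FG := by
      simpa using FinitePresentation.fg_ker ℓ.rangeRestrict ℓ.surjective_rangeRestrict
    have hj := injective_funLeft_castSucc_comp_subtype_ker N.injective_subtype
    have : Module.Finite A (ker ℓ) := Module.Finite.iff_fg.mpr hK
    have := finitePresentation_of_fg _ (Submodule.fg_range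
      (funLeft A A Fin.castSucc ∘ₗ N.subtype ∘ₗ (ker ℓ).subtype))
    have : FinitePresentation A (ker ℓ) :=
      .of_equiv (M := range _) (N := ker ℓ) (LinearEquiv.ofInjective _ hj).symm
    have : FinitePresentation A (ker ℓ.rangeRestrict) := by rwa [ker_rangeRestrict]
    exact finitePresentation_of_ker ℓ.rangeRestrict ℓ.surjective_rangeRestrict

theorem finitePresentation_ker {k l : ℕ} (g : (Fin k → A) →ₗ[A] (Fin l → A)) :
    FinitePresentation A (ker g) := by
  have := hA.finitePresentation_of_fg _ (Submodule.fg_range g)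
  refine hA.finitePresentation_of_fg _ ?_
  simpa using FinitePresentation.fg_ker g.rangeRestrict g.surjective_rangeRestrict

theorem finitePresentation_of_finitelyCopresented {M : Type*} [AddCommGroup M] [Module A M]
    (hM : FinitelyCopresented A M) : FinitePresentation A M := by
  obtain ⟨m, n, f, g, hf, hfg⟩ := hM
  have := hA.finitePresentation_ker g
  exact .of_equiv (M := ker g)
    ((LinearEquiv.ofEq _ _ hfg.linearMap_ker_eq).trans (LinearEquiv.ofInjective f hf).symm)

theorem finitelyCopresented_of_bijective_dual_eval {M : Type*} [AddCommGroup M] [Module A M]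
    [FinitePresentation A M] (hM : Function.Bijective (Dual.eval A M)) :
    FinitelyCopresented A M :=
  have := hA.finitePresentation_of_finitelyCopresented (finitelyCopresented_dual (M := M))
  (finitelyCopresented_dual (M := Dual A M)).of_linearEquiv (.ofBijective _ hM)

end IsCoherentRing

section Domain

variable {A M : Type*} [CommRing A] [AddCommGroup M] [Module A M]

theorem exists_ne_zero_comp_eq_smul_of_eqOn_ker [NoZeroDivisors A] {N N' : Type*}
    [AddCommGroup N] [Module A N] [AddCommGroup N'] [Module A N']
    (f : M →ₗ[A] N) (π : N →ₗ[A] N') (ℓ : Dual A N) (φ : Dual A M) {s₀ : A} (hs₀ : s₀ ≠ 0)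
    (ψ₀ : Dual A N') (hψ₀ : ∀ x ∈ ker (ℓ ∘ₗ f), ψ₀ (π (f x)) = s₀ * φ x) :
    ∃ s : A, s ≠ 0 ∧ ∃ ψ : Dual A N, ψ ∘ₗ f = s • φ := by
  by_cases hℓ : ∀ x, ℓ (f x) = 0
  · exact ⟨s₀, hs₀, ψ₀ ∘ₗ π, LinearMap.ext fun x => hψ₀ x (hℓ x)⟩
  push Not at hℓ
  obtain ⟨x₁, hx₁⟩ := hℓ
  -- `ℓ (f x₁) • x - ℓ (f x) • x₁` lies in the kernel of `ℓ ∘ f`, where `ψ₀ ∘ π` is known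
  refine ⟨s₀ * ℓ (f x₁), mul_ne_zero hs₀ hx₁,
    ℓ (f x₁) • (ψ₀ ∘ₗ π) + (s₀ * φ x₁ - ψ₀ (π (f x₁))) • ℓ, LinearMap.ext fun x => ?_⟩
  have hx := hψ₀ (ℓ (f x₁) • x - ℓ (f x) • x₁) (by simp [mul_comm])
  simp only [map_sub, map_smul, smul_eq_mul] at hx
  simp only [LinearMap.add_apply, LinearMap.smul_apply, LinearMap.comp_apply, smul_eq_mul]
  linear_combination hx

theorem exists_ne_zero_comp_eq_smul_of_injective [IsDomain A] {m : ℕ}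
    (f : M →ₗ[A] (Fin m → A)) (hf : Function.Injective f) (φ : Dual A M) :
    ∃ s : A, s ≠ 0 ∧ ∃ ψ : Dual A (Fin m → A), ψ ∘ₗ f = s • φ := by
  induction m generalizing M with
  | zero =>
    have : Subsingleton M := hf.subsingleton
    exact ⟨1, one_ne_zero, 0, Subsingleton.elim _ _⟩
  | succ m ih =>
    let M₀ := ker (proj (Fin.last m) ∘ₗ f)
    obtain ⟨s₀, hs₀, ψ₀, hψ₀⟩ := ih _ (injective_funLeft_castSucc_comp_subtype_ker hf)
      (φ ∘ₗ M₀.subtype)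
    exact exists_ne_zero_comp_eq_smul_of_eqOn_ker f _ _ φ hs₀ ψ₀
      fun x hx => by simpa using LinearMap.congr_fun hψ₀ ⟨x, hx⟩

end Domain

theorem Module.Dual.apply_comp_eq_of_coordinates {A M ι : Type*} [CommRing A] [AddCommGroup M]
    [Module A M] [Fintype ι] [DecidableEq ι] (ξ : Dual A (Dual A M)) (f : M →ₗ[A] (ι → A))
    (χ : Dual A (ι → A)) : χ (fun i => ξ (proj i ∘ₗ f)) = ξ (χ ∘ₗ f) := by
  have hχ (v : ι → A) : χ v = ∑ i, v i * χ (Pi.single i 1) := by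
    rw [← (LinearEquiv.piRing A A ι A).symm_apply_apply χ, LinearEquiv.piRing_symm_apply]
    simp [LinearEquiv.piRing_apply]
  have hχf : χ ∘ₗ f = ∑ i, χ (Pi.single i 1) • (proj i ∘ₗ f) := by
    ext x
    simp [hχ (f x), mul_comm]
  rw [hχ, hχf, map_sum]
  simp [mul_comm]

theorem Module.FinitelyCopresented.bijective_dual_eval {A M : Type*} [CommRing A] [IsDomain A]
    [AddCommGroup M] [Module A M] (hM : FinitelyCopresented A M) :
    Function.Bijective (Dual.eval A M) := by
  obtain ⟨m, n, f, g, hf, hfg⟩ := hM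
  refine ⟨fun x y hxy => hf (funext fun i => by simpa using LinearMap.congr_fun hxy (proj i ∘ₗ f)),
    fun ξ => ?_⟩
  -- the image of `ξ` under the double dual of `f`, in coordinates
  let y : Fin m → A := fun i => ξ (proj i ∘ₗ f)
  have hy : ∀ χ : Dual A (Fin m → A), χ y = ξ (χ ∘ₗ f) :=
    Dual.apply_comp_eq_of_coordinates ξ f
  obtain ⟨x, hx⟩ : y ∈ range f := by
    rw [← hfg.linearMap_ker_eq, mem_ker]
    funext j
    simpa [comp_assoc, hfg.linearMap_comp_eq_zero] using hy (proj j ∘ₗ g)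
  refine ⟨x, LinearMap.ext fun φ => ?_⟩
  obtain ⟨s, hs, ψ, hψ⟩ := exists_ne_zero_comp_eq_smul_of_injective f hf φ
  refine mul_left_cancel₀ hs ?_
  calc s * φ x = ψ y := by rw [← hx]; simpa using (LinearMap.congr_fun hψ x).symm
    _ = s * ξ φ := by rw [hy, hψ, map_smul, smul_eq_mul]

/-- Over a coherent domain, a finitely presented module `M` is reflexive iff it is
finitely copresented, i.e. there is an exact sequence `0 → M → A^m → A^n`. -/
theorem stmt_2 (A : Type) [CommRing A] [IsDomain A] (hA : IsCoherentRing A)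
    (M : Type) [AddCommGroup M] [Module A M] [Module.FinitePresentation A M] :
    Function.Bijective (Module.Dual.eval A M) ↔
      ∃ (m n : ℕ) (f : M →ₗ[A] (Fin m → A)) (g : (Fin m → A) →ₗ[A] (Fin n → A)),
        Function.Injective f ∧ Function.Exact f g :=
  ⟨hA.finitelyCopresented_of_bijective_dual_eval, FinitelyCopresented.bijective_dual_eval⟩
end

section
/- Let A be a coherent integral domain, M a finitely presented A-module, and G a finitely presented reflexive A-module. Then Hom_A(M, G) is a reflexive A-module. In particular, the dual M^∨ of any finitely presented A-module is reflexive. -/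
/-!
Present `M` as a quotient of `Aⁿ` with kernel `N`. Left exactness of `Hom(-, G)` makes
`Hom(M, G)` the kernel of the restriction `Hom(Aⁿ, G) → Hom(N, G)`, whose source `Gⁿ` is finite
and reflexive and whose target embeds in its double dual because `G` does. Over a domain, such a
kernel is reflexive: every functional on a submodule of a finite module extends to the whole
module after multiplication by a nonzero scalar, and this is enough to pin down an element of
the double dual of the submodule by its values on restricted functionals.
-/

open CategoryTheory

open Module LinearMap

section CommRing

variable {A : Type} [CommRing A]

lemma injective_dual_eval_linearMap {K G : Type} [AddCommGroup K] [Module A K]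
    [AddCommGroup G] [Module A G] (hG : Function.Injective (Dual.eval A G)) :
    Function.Injective (Dual.eval A (K →ₗ[A] G)) := fun _ _ h ↦
  LinearMap.ext fun k ↦ hG <| LinearMap.ext fun g ↦ LinearMap.congr_fun h (g ∘ₗ applyₗ k)

instance Module.IsReflexive.pi {ι G : Type} [Finite ι] [AddCommGroup G] [Module A G]
    [IsReflexive A G] : IsReflexive A (ι → G) := by
  obtain ⟨n, ⟨e⟩⟩ := Finite.exists_equiv_fin ι
  suffices IsReflexive A (Fin n → G) from Module.equiv (LinearEquiv.funCongrLeft A G e)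
  clear e
  induction n with
  | zero => infer_instance
  | succ n ih => exact Module.equiv (Fin.consLinearEquiv A fun _ ↦ G)

end CommRing

section IsDomain

variable {A : Type} [CommRing A] [IsDomain A]

lemma exists_extend_coprod_toSpanSingleton {K F : Type} [AddCommGroup K] [Module A K]
    [AddCommGroup F] [Module A F] (ι : K →ₗ[A] F) (x : F) (f : K →ₗ[A] A)
    (hf : ker ι ≤ ker f) :
    ∃ a : A, a ≠ 0 ∧ ∃ f' : K × A →ₗ[A] A,
      ker (ι.coprod (toSpanSingleton A F x)) ≤ ker f' ∧ f' ∘ₗ inl A K A = a • f := by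
  by_cases htors : ∃ c : A, c ≠ 0 ∧ ∃ k₀ : K, ι k₀ = c • x
  · obtain ⟨c, hc, k₀, hk₀⟩ := htors
    refine ⟨c, hc, f ∘ₗ (c • fst A K A + (toSpanSingleton A K k₀) ∘ₗ snd A K A), ?_, ?_⟩
    · rintro ⟨k, b⟩ hkb
      simp only [mem_ker, coprod_apply, toSpanSingleton_apply] at hkb
      change f (c • k + b • k₀) = 0
      apply hf
      rw [mem_ker, map_add, map_smul, map_smul, hk₀, smul_comm b c, ← smul_add, hkb, smul_zero]
    · ext k
      simp
  · refine ⟨1, one_ne_zero, f ∘ₗ fst A K A, ?_, by rw [one_smul]; rfl⟩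
    rintro ⟨k, b⟩ hkb
    simp only [mem_ker, coprod_apply, toSpanSingleton_apply] at hkb
    obtain rfl : b = 0 := by
      by_contra hb
      exact htors ⟨b, hb, -k, by rw [map_neg, neg_eq_iff_add_eq_zero, hkb]⟩
    simpa using hf (by simpa using hkb)

lemma exists_comp_eq_smul_of_span_sup_range_eq_top {F : Type} [AddCommGroup F] [Module A F]
    (s : Finset F) {K : Type} [AddCommGroup K] [Module A K] (ι : K →ₗ[A] F) (f : K →ₗ[A] A)
    (hf : ker ι ≤ ker f) (hs : Submodule.span A s ⊔ range ι = ⊤) :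
    ∃ a : A, a ≠ 0 ∧ ∃ g : Dual A F, g ∘ₗ ι = a • f := by
  classical
  induction s using Finset.induction_on generalizing K with
  | empty =>
    have hι : Function.Surjective ι := range_eq_top.mp (by simpa using hs)
    obtain ⟨g, hg⟩ := (exact_lcomp_of_exact_of_surjective A (exact_subtype_ker_map ι) hι f).mp
      (le_ker_iff_comp_subtype_eq_zero.mp hf)
    exact ⟨1, one_ne_zero, g, by rw [one_smul]; exact hg⟩
  | insert x s _ ih =>
    obtain ⟨a, ha, f', hf', hf'f⟩ := exists_extend_coprod_toSpanSingleton ι x f hf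
    have hs' : Submodule.span A s ⊔ range (ι.coprod (toSpanSingleton A F x)) = ⊤ := by
      rw [← hs, range_coprod, range_toSpanSingleton, Finset.coe_insert, Submodule.span_insert]
      ac_rfl
    obtain ⟨b, hb, g, hg⟩ := ih _ f' hf' hs'
    refine ⟨b * a, mul_ne_zero hb ha, g, ?_⟩
    rw [← coprod_inl ι (toSpanSingleton A F x), ← comp_assoc, hg, smul_comp, hf'f, smul_smul]

lemma exists_comp_eq_smul_of_injective {K F : Type} [AddCommGroup K] [Module A K]
    [AddCommGroup F] [Module A F] [Module.Finite A F] {ι : K →ₗ[A] F}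
    (hι : Function.Injective ι) (f : Dual A K) :
    ∃ a : A, a ≠ 0 ∧ ∃ g : Dual A F, g ∘ₗ ι = a • f := by
  obtain ⟨s, hs⟩ := Module.Finite.fg_top (R := A) (M := F)
  exact exists_comp_eq_smul_of_span_sup_range_eq_top s ι f
    (by simp [ker_eq_bot.mpr hι]) (by simp [hs])

lemma LinearMap.dualMap_dualMap_injective_of_injective {K F : Type} [AddCommGroup K]
    [Module A K] [AddCommGroup F] [Module A F] [Module.Finite A F] {ι : K →ₗ[A] F}
    (hι : Function.Injective ι) : Function.Injective ι.dualMap.dualMap := by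
  refine (injective_iff_map_eq_zero _).mpr fun ξ hξ ↦ LinearMap.ext fun f ↦ ?_
  obtain ⟨a, ha, g, hg⟩ := exists_comp_eq_smul_of_injective hι f
  have : a * ξ f = 0 := by
    rw [← smul_eq_mul, ← map_smul, ← hg]
    exact LinearMap.congr_fun hξ g
  simpa [ha] using this

lemma Module.IsReflexive.of_exact {K F F₁ : Type} [AddCommGroup K] [Module A K]
    [AddCommGroup F] [Module A F] [Module.Finite A F] [IsReflexive A F]
    [AddCommGroup F₁] [Module A F₁] (hF₁ : Function.Injective (Dual.eval A F₁))
    {ι : K →ₗ[A] F} {ρ : F →ₗ[A] F₁} (hι : Function.Injective ι) (hιρ : Function.Exact ι ρ) :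
    IsReflexive A K := by
  refine ⟨⟨.of_comp (f := ι.dualMap.dualMap) ((bijective_dual_eval A F).injective.comp hι),
    fun ξ ↦ ?_⟩⟩
  obtain ⟨y, hy⟩ := (bijective_dual_eval A F).surjective (ι.dualMap.dualMap ξ)
  have hρy : ρ y = 0 := hF₁ <| by
    change ρ.dualMap.dualMap (Dual.eval A F y) = Dual.eval A F₁ 0
    ext g
    have hg : ι.dualMap (ρ.dualMap g) = 0 := LinearMap.ext fun k ↦ by
      simp [hιρ.apply_apply_eq_zero]
    simp [hy, hg]
  obtain ⟨x, rfl⟩ := (hιρ y).mp hρy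
  exact ⟨x, dualMap_dualMap_injective_of_injective hι hy⟩

end IsDomain

theorem stmt_3_general (A : Type) [CommRing A] [IsDomain A]
    (M G : Type) [AddCommGroup M] [Module A M] [AddCommGroup G] [Module A G]
    [Module.FinitePresentation A M] [Module.FinitePresentation A G]
    (hG : Function.Bijective (Module.Dual.eval A G)) :
    Function.Bijective (Module.Dual.eval A (M →ₗ[A] G)) := by
  have : IsReflexive A G := ⟨hG⟩
  obtain ⟨n, π, hπ⟩ := Module.Finite.exists_fin' A M
  have : IsReflexive A ((Fin n → A) →ₗ[A] G) :=
    Module.equiv (LinearEquiv.piRing A G (Fin n) A).symm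
  have hexact := exact_lcomp_of_exact_of_surjective G (exact_subtype_ker_map π) hπ
  have := IsReflexive.of_exact (injective_dual_eval_linearMap hG.injective)
    (lcomp_injective_of_surjective π hπ) hexact
  exact bijective_dual_eval A (M →ₗ[A] G)

/-- Over a coherent domain, if `G` is a finitely presented reflexive module and `M` is
finitely presented, then `Hom_A(M, G)` is reflexive. -/
theorem stmt_3 (A : Type) [CommRing A] [IsDomain A] (hA : IsCoherentRing A)
    (M G : Type) [AddCommGroup M] [Module A M] [AddCommGroup G] [Module A G]
    [Module.FinitePresentation A M] [Module.FinitePresentation A G]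
    (hG : Function.Bijective (Module.Dual.eval A G)) :
    Function.Bijective (Module.Dual.eval A (M →ₗ[A] G)) :=
  stmt_3_general A M G hG
end

section
/- Let (A, m) be a local ring, M an A-module, N a finitely generated A-module supported on {m}, and f ∈ m an M-regular element. Define τ_N(M) as the supremum of n such that Ext_A^i(N, M) = 0 for all i < n. Then τ_N(M) = τ_N(M/fM) + 1. -/
/-!
Let `P → N` be a projective resolution and `H^i(Y)` the cohomology of `Hom(P, Y)`, so that
`Ext^i(N, Y) ≅ H^i(Y)`. Some power `f ^ k` kills `N`, so multiplication by `f ^ k` on `P` is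
null-homotopic and `f ^ k` acts as zero on every `H^i(Y)`. As `P` is degreewise projective,
`0 → M → M → M/fM → 0` (the first map being `f`) yields a short exact sequence of Hom complexes,
with long exact sequence `H^i(M) → H^i(M/fM) → H^{i+1}(M) → H^{i+1}(M)`, the last map being `f`.
So `H^i(M) = H^{i+1}(M) = 0` forces `H^i(M/fM) = 0`, while `H^i(M/fM) = 0` makes `f` injective
on `H^{i+1}(M)`, which then vanishes because `f ^ k` kills it. For the same reason
`H^0(M) ⊆ Hom(P_0, M)` vanishes, and the vanishing ranges of `M` and `M/fM` differ by exactly one.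
-/

open CategoryTheory

/-- `extTau A N M` is the supremum of `n` such that `Ext_A^i(N, M) = 0` for all `i < n`. -/
noncomputable def extTau (A : Type) [CommRing A] (N M : ModuleCat.{0} A) : ℕ∞ :=
  sSup {n : ℕ∞ | ∀ i : ℕ, (i : ℕ∞) < n →
    Subsingleton (((Ext A (ModuleCat.{0} A) i).obj (Opposite.op N)).obj M)}

open Limits Opposite HomologicalComplex

namespace ENat

variable {p q : ℕ → Prop}

lemma sSup_setOf_forall_lt_mem :
    sSup {n : ℕ∞ | ∀ i : ℕ, (i : ℕ∞) < n → p i} ∈ {n : ℕ∞ | ∀ i : ℕ, (i : ℕ∞) < n → p i} := by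
  intro i hi
  obtain ⟨b, hb, hib⟩ := lt_sSup_iff.mp hi
  exact hb i hib

variable (h₀ : p 0) (hpq : ∀ i, p i → p (i + 1) → q i) (hqp : ∀ i, q i → p (i + 1))
include h₀ hpq hqp

lemma forall_lt_add_one_iff_of_shift (n : ℕ∞) :
    (∀ i : ℕ, (i : ℕ∞) < n + 1 → p i) ↔ ∀ i : ℕ, (i : ℕ∞) < n → q i := by
  have hsucc (i : ℕ) : ((i + 1 : ℕ) : ℕ∞) < n + 1 ↔ (i : ℕ∞) < n := by
    push_cast
    exact ENat.add_lt_add_iff_right one_ne_top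
  constructor
  · intro h i hi
    exact hpq i (h i (hi.trans_le le_self_add)) (h (i + 1) ((hsucc i).2 hi))
  · rintro h (_ | i) hi
    · exact h₀
    · exact hqp i (h i ((hsucc i).1 hi))

lemma sSup_setOf_forall_lt_eq_add_one_of_shift :
    sSup {n : ℕ∞ | ∀ i : ℕ, (i : ℕ∞) < n → p i}
      = sSup {n : ℕ∞ | ∀ i : ℕ, (i : ℕ∞) < n → q i} + 1 := by
  have key := forall_lt_add_one_iff_of_shift h₀ hpq hqp
  refine le_antisymm (sSup_le fun n hn => ?_) (le_sSup ((key _).2 sSup_setOf_forall_lt_mem))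
  rcases eq_or_ne n 0 with rfl | hn₀
  · exact zero_le
  obtain ⟨m, rfl⟩ := exists_add_of_le (Order.one_le_iff_ne_zero.2 hn₀)
  rw [add_comm] at hn ⊢
  refine add_le_add_left (le_sSup ?_) 1
  exact (key m).1 hn

end ENat

section Linear

variable {R C : Type*} [CommRing R] [Category* C] [Preadditive C] [Linear R C]

lemma HomologicalComplex.homologyMap_smul {ι : Type*} {c : ComplexShape ι}
    {K L : HomologicalComplex C c} (a : R) (φ : K ⟶ L) (i : ι) [K.HasHomology i]
    [L.HasHomology i] : homologyMap (a • φ) i = a • homologyMap φ i :=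
  ShortComplex.homologyMap_smul ((shortComplexFunctor C c i).map φ) a

lemma CategoryTheory.Iso.smul_id_eq_zero {X Y : C} (e : X ≅ Y) {a : R} (h : a • 𝟙 Y = 0) :
    a • 𝟙 X = 0 :=
  calc a • 𝟙 X = e.hom ≫ (a • 𝟙 Y) ≫ e.inv := by simp
    _ = 0 := by rw [h, zero_comp, comp_zero]

lemma CategoryTheory.Limits.IsZero.of_mono_smul_id_of_pow_smul_id_eq_zero {X : C} {a : R}
    [Mono (a • 𝟙 X)] {k : ℕ} (h : a ^ k • 𝟙 X = 0) : IsZero X := by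
  have hmono (n : ℕ) : Mono (a ^ n • 𝟙 X) := by
    induction n with
    | zero => simpa using inferInstanceAs (Mono (𝟙 X))
    | succ n ih =>
      rw [pow_succ, mul_smul, ← Category.comp_id (a • 𝟙 X), ← Linear.comp_smul]
      exact mono_comp _ _
  exact IsZero.of_mono_eq_zero _ h

end Linear

section HomologySequence

variable {C : Type*} [Category* C] [Abelian C]

lemma CochainComplex.mono_homologyMap_zero {K L : CochainComplex C ℕ} (φ : K ⟶ L) [Mono φ] :
    Mono (homologyMap φ 0) := by
  have : Mono (homologyMap φ 0 ≫ L.isoHomologyπ₀.inv) := by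
    rw [CochainComplex.isoHomologyπ₀_inv_naturality]
    infer_instance
  exact mono_of_mono _ L.isoHomologyπ₀.inv

namespace CategoryTheory.ShortComplex.ShortExact

variable {ι : Type*} {c : ComplexShape ι} {S : ShortComplex (HomologicalComplex C c)}
  (hS : S.ShortExact) {i j : ι} (hij : c.Rel i j)
include hS hij

lemma isZero_homology_X₃ (h₂ : IsZero (S.X₂.homology i)) (h₁ : IsZero (S.X₁.homology j)) :
    IsZero (S.X₃.homology i) :=
  (hS.homology_exact₃ i j hij).isZero_X₂ (h₂.eq_of_src _ _) (h₁.eq_of_tgt _ _)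

lemma mono_homologyMap_f (h₃ : IsZero (S.X₃.homology i)) :
    Mono (HomologicalComplex.homologyMap S.f j) :=
  (hS.homology_exact₁ i j hij).mono_g (h₃.eq_of_src _ _)

end CategoryTheory.ShortComplex.ShortExact

end HomologySequence

namespace ChainComplex

variable {R C : Type*} [Ring R] [Category* C] [Abelian C] [Linear R C] (K : ChainComplex C ℕ)

noncomputable def linearYonedaMap {Y Y' : C} (g : Y ⟶ Y') :
    K.linearYonedaObj R Y ⟶ K.linearYonedaObj R Y' where
  f i := ((linearYoneda R C).map g).app (op (K.X i))
  comm' _ _ _ := by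
    ext x
    exact (Category.assoc _ _ _).symm

noncomputable def linearYonedaShortComplex (S : ShortComplex C) :
    ShortComplex (CochainComplex (ModuleCat R) ℕ) :=
  ShortComplex.mk (K.linearYonedaMap S.f) (K.linearYonedaMap S.g) (by
    ext i (x : K.X i ⟶ S.X₁)
    change (x ≫ S.f) ≫ S.g = 0
    rw [Category.assoc, S.zero, comp_zero])

lemma shortExact_linearYonedaShortComplex [∀ i, Projective (K.X i)] {S : ShortComplex C}
    (hS : S.ShortExact) : (K.linearYonedaShortComplex (R := R) S).ShortExact := by
  have := hS.mono_f
  have := hS.epi_g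
  refine shortExact_of_degreewise_shortExact _ fun i => ShortComplex.ShortExact.mk' ?_ ?_ ?_
  · rw [ShortComplex.moduleCat_exact_iff]
    intro (x : K.X i ⟶ S.X₂) (hx : x ≫ S.g = 0)
    exact ⟨hS.exact.lift x hx, hS.exact.lift_f x hx⟩
  · rw [ModuleCat.mono_iff_injective]
    intro (x : K.X i ⟶ S.X₁) (y : K.X i ⟶ S.X₁) (h : x ≫ S.f = y ≫ S.f)
    exact (cancel_mono S.f).mp h
  · rw [ModuleCat.epi_iff_surjective]
    intro (x : K.X i ⟶ S.X₃)
    exact ⟨Projective.factorThru x S.g, Projective.factorThru_comp x S.g⟩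

end ChainComplex

section CommRing

variable {R C : Type*} [CommRing R] [Category* C] [Abelian C] [Linear R C]

namespace ChainComplex

variable {K : ChainComplex C ℕ}

lemma linearYonedaMap_smul_id (Y : C) (a : R) :
    K.linearYonedaMap (a • 𝟙 Y) = a • 𝟙 (K.linearYonedaObj R Y) := by
  ext i (x : K.X i ⟶ Y)
  change x ≫ (a • 𝟙 Y) = a • x
  rw [Linear.comp_smul, Category.comp_id]

lemma smul_id_homology_linearYonedaObj_eq_zero {a : R} (h : Homotopy (a • 𝟙 K) 0) (Y : C) (i : ℕ) :
    a • 𝟙 ((K.linearYonedaObj R Y).homology i) = 0 := by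
  let F := ((linearYoneda R C).obj Y).rightOp.mapHomologicalComplex (ComplexShape.down ℕ)
  -- `Φ φ` is precomposition with `φ`, so `Hom(-, Y)` carries the null-homotopy along.
  let Φ : (K ⟶ K) → (K.linearYonedaObj R Y ⟶ K.linearYonedaObj R Y) :=
    fun φ => (unopFunctor _ _).map (F.map φ).op
  have hΦ : Φ (a • 𝟙 K) = a • 𝟙 (K.linearYonedaObj R Y) := by
    ext j (x : K.X j ⟶ Y)
    change (a • 𝟙 _) ≫ x = a • x
    rw [Linear.smul_comp, Category.id_comp]
  have hΦ₀ : Φ 0 = 0 := by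
    ext j (x : K.X j ⟶ Y)
    exact zero_comp
  have : homologyMap (Φ (a • 𝟙 K)) i = homologyMap (Φ 0) i :=
    (((linearYoneda R C).obj Y).rightOp.mapHomotopy h).unop.homologyMap_eq i
  rwa [hΦ, hΦ₀, homologyMap_smul, homologyMap_id, homologyMap_zero] at this

end ChainComplex

noncomputable def CategoryTheory.ProjectiveResolution.smulIdHomotopyZero {Y : C}
    (P : ProjectiveResolution Y) {a : R} (ha : a • 𝟙 Y = 0) : Homotopy (a • 𝟙 P.complex) 0 :=
  P.liftHomotopyZero _ (by
    refine to_single_hom_ext ?_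
    have he := (singleObjXSelf (ComplexShape.down ℕ) 0 Y).smul_id_eq_zero ha
    simp only [comp_f, smul_f_apply, id_f, zero_f]
    rw [Linear.smul_comp, Category.id_comp, ← Category.comp_id (P.π.f 0), ← Linear.comp_smul,
      he, comp_zero])

lemma CategoryTheory.ProjectiveResolution.isZero_homology_linearYonedaObj_of_mono {N M : C}
    (P : ProjectiveResolution N) {a : R} {k : ℕ} (hN : a ^ k • 𝟙 N = 0) (i : ℕ)
    (h : Mono (homologyMap (P.complex.linearYonedaMap (R := R) (a • 𝟙 M)) i)) :
    IsZero ((P.complex.linearYonedaObj R M).homology i) := by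
  rw [ChainComplex.linearYonedaMap_smul_id, homologyMap_smul, homologyMap_id] at h
  exact IsZero.of_mono_smul_id_of_pow_smul_id_eq_zero
    (ChainComplex.smul_id_homology_linearYonedaObj_eq_zero (P.smulIdHomotopyZero hN) M i)

end CommRing

section Ext

variable {R C : Type*} [CommRing R] [Category* C] [Abelian C] [Linear R C] [EnoughProjectives C]
  {N M Q : C}

lemma CategoryTheory.ProjectiveResolution.subsingleton_ext_iff (P : ProjectiveResolution N)
    (Y : C) (i : ℕ) :
    Subsingleton (((Ext R C i).obj (op N)).obj Y) ↔
      IsZero ((P.complex.linearYonedaObj R Y).homology i) := by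
  rw [← ModuleCat.isZero_iff_subsingleton]
  exact (P.isoExt i Y).isZero_iff

variable {a : R} {k : ℕ} (hN : a ^ k • 𝟙 N = 0) {g : M ⟶ Q} {w : (a • 𝟙 M) ≫ g = 0}
  (hS : (ShortComplex.mk _ _ w).ShortExact)

include hN hS in
lemma subsingleton_ext_zero_of_pow_smul_id_eq_zero :
    Subsingleton (((Ext R C 0).obj (op N)).obj M) := by
  let P := projectiveResolution N
  rw [P.subsingleton_ext_iff]
  have : Mono (P.complex.linearYonedaMap (R := R) (a • 𝟙 M)) :=
    (P.complex.shortExact_linearYonedaShortComplex hS).mono_f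
  exact P.isZero_homology_linearYonedaObj_of_mono hN 0 (CochainComplex.mono_homologyMap_zero _)

include hN hS in
lemma subsingleton_ext_succ_of_subsingleton_ext (i : ℕ)
    (h : Subsingleton (((Ext R C i).obj (op N)).obj Q)) :
    Subsingleton (((Ext R C (i + 1)).obj (op N)).obj M) := by
  let P := projectiveResolution N
  rw [P.subsingleton_ext_iff] at h ⊢
  exact P.isZero_homology_linearYonedaObj_of_mono hN (i + 1)
    ((P.complex.shortExact_linearYonedaShortComplex hS).mono_homologyMap_f rfl h)

include hS in
lemma subsingleton_ext_of_subsingleton_ext_of_subsingleton_ext_succ (i : ℕ)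
    (h : Subsingleton (((Ext R C i).obj (op N)).obj M))
    (h' : Subsingleton (((Ext R C (i + 1)).obj (op N)).obj M)) :
    Subsingleton (((Ext R C i).obj (op N)).obj Q) := by
  let P := projectiveResolution N
  rw [P.subsingleton_ext_iff] at h h' ⊢
  exact (P.complex.shortExact_linearYonedaShortComplex hS).isZero_homology_X₃ rfl h h'

end Ext

/-- For a local ring `A`, a finitely generated module `N` supported on the closed point,
and an `M`-regular element `f ∈ 𝔪`, one has `τ_N(M) = τ_N(M/fM) + 1`. -/
theorem stmt_5 (A : Type) [CommRing A] [IsLocalRing A]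
    (M N : Type) [AddCommGroup M] [Module A M] [AddCommGroup N] [Module A N]
    [Module.Finite A N]
    (hN : Module.support A N = {IsLocalRing.closedPoint A})
    (f : A) (hf : f ∈ IsLocalRing.maximalIdeal A)
    (hreg : ∀ x : M, f • x = 0 → x = 0) :
    extTau A (ModuleCat.of A N) (ModuleCat.of A M)
      = extTau A (ModuleCat.of A N)
          (ModuleCat.of A (M ⧸ (Ideal.span {f} • (⊤ : Submodule A M)))) + 1 := by
  obtain ⟨k, hk⟩ : f ∈ (Module.annihilator A N).radical := by
    rwa [← PrimeSpectrum.vanishingIdeal_zeroLocus_eq_radical, ← Module.support_eq_zeroLocus, hN,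
      PrimeSpectrum.vanishingIdeal_singleton]
  have hNk : f ^ k • 𝟙 (ModuleCat.of A N) = 0 := by
    ext x
    exact Module.mem_annihilator.mp hk x
  have hS := (IsSMulRegular.of_right_eq_zero_of_smul hreg).smulShortComplex_shortExact
    (M := ModuleCat.of A M)
  rw [Submodule.ideal_span_singleton_smul]
  exact ENat.sSup_setOf_forall_lt_eq_add_one_of_shift
    (subsingleton_ext_zero_of_pow_smul_id_eq_zero hNk hS)
    (subsingleton_ext_of_subsingleton_ext_of_subsingleton_ext_succ hS)
    (subsingleton_ext_succ_of_subsingleton_ext hNk hS)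
end

section
/- Let V be a non-discrete valuation ring of finite rank and f ∈ m_V a nonzero element. Then depth_V(V/fV) = 0, i.e., there exists a nonzero element of V/fV annihilated by a power (equivalently, killed after localization away from m_V) of every finitely generated subideal of m_V; concretely, Γ_{m_V}(V/fV) ≠ 0. -/
open CategoryTheory

/-- Depth of a module, defined via vanishing of local cohomology supported on `V(I)`. -/
noncomputable def lcDepth {A : Type} [CommRing A] (I : Ideal A) (M : ModuleCat.{0} A) : ℕ∞ :=
  sSup {n : ℕ∞ | ∀ i : ℕ, (i : ℕ∞) < n →
    Subsingleton ((localCohomology.ofSelfLERadical I i).obj M)}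

/-!
A valuation ring of finite rank has finitely many primes, all comparable, so by prime avoidance
`𝔪 = √(e)` for some `e`. Since divisibility in `V` is total, either `e ∣ f` or `√(f) = 𝔪` too;
either way `f = d g` with `√(d) = 𝔪`. The class of `g` in `V/fV` is then nonzero and killed by a
power of every element of `𝔪`, so it defines a nonzero element of
`Γ_𝔪(V/fV) = colim_{√J ⊇ 𝔪} Hom(V/J, V/fV)`, and the depth is `0`.
-/

open Limits Opposite

universe u

lemma Order.finite_of_krullDim_lt_top {α : Type*} [PartialOrder α] [Std.Total (α := α) (· ≤ ·)]
    (h : krullDim α < ⊤) : Finite α := by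
  by_contra hfin
  have : Infinite α := not_finite_iff_infinite.mp hfin
  let _ : LinearOrder α := { le_total := Std.Total.total, toDecidableLE := Classical.decRel _ }
  have : InfiniteDimensionalOrder α := ⟨fun n => by
    obtain ⟨s, -, hs⟩ := (Set.infinite_univ (α := α)).exists_subset_card_eq (n + 1)
    exact ⟨⟨n, s.orderEmbOfFin hs, fun i => (s.orderEmbOfFin hs).strictMono (by simp)⟩, rfl⟩⟩
  exact h.ne krullDim_eq_top

open IsLocalRing in
lemma IsLocalRing.exists_radical_span_singleton_eq_maximalIdeal {R : Type*} [CommRing R]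
    [IsLocalRing R] [Finite (PrimeSpectrum R)] :
    ∃ e : R, (Ideal.span {e}).radical = maximalIdeal R := by
  set S : Set (Ideal R) := {p | p.IsPrime ∧ p ≠ maximalIdeal R}
  have hS : S.Finite :=
    (Set.finite_range PrimeSpectrum.asIdeal).subset fun p hp => ⟨⟨p, hp.1⟩, rfl⟩
  have hm : ¬ ((maximalIdeal R : Set R) ⊆ ⋃ p ∈ S, p) := by
    rw [Ideal.subset_iUnion_iff_mem_of_isMaximal_of_finite hS (maximalIdeal R) (maximalIdeal R)
      (fun p hp _ _ => hp.1) (maximalIdeal.isMaximal R).ne_top (maximalIdeal.isMaximal R).ne_top]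
    exact fun h => h.2 rfl
  obtain ⟨e, hem, heS⟩ := Set.not_subset.mp hm
  simp only [Set.mem_iUnion, SetLike.mem_coe, not_exists] at heS
  refine ⟨e, le_antisymm ?_ ?_⟩
  · exact (maximalIdeal.isMaximal R).isPrime.radical_le_iff.mpr
      ((Ideal.span_singleton_le_iff_mem _).mpr hem)
  · rw [Ideal.radical_eq_sInf]
    refine le_sInf fun p ⟨hep, hp⟩ => ?_
    by_contra hpm
    exact heS p ⟨hp, fun h => hpm h.ge⟩ (hep (Ideal.mem_span_singleton_self e))

namespace PreValuationRing

open IsLocalRing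

variable {A : Type*} [CommRing A] [PreValuationRing A]

instance : Std.Total (α := PrimeSpectrum A) (· ≤ ·) :=
  ⟨fun p q => (ValuationRing.le_total_ideal A).total p.asIdeal q.asIdeal⟩

lemma finite_primeSpectrum (h : ringKrullDim A < ⊤) : Finite (PrimeSpectrum A) :=
  Order.finite_of_krullDim_lt_top h

lemma exists_dvd_radical_span_singleton_eq_maximalIdeal [IsLocalRing A]
    [Finite (PrimeSpectrum A)] {f : A} (hf : f ∈ maximalIdeal A) :
    ∃ d : A, d ∣ f ∧ (Ideal.span {d}).radical = maximalIdeal A := by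
  obtain ⟨e, he⟩ := exists_radical_span_singleton_eq_maximalIdeal (R := A)
  rcases ValuationRing.dvd_total e f with hef | hfe
  · exact ⟨e, hef, he⟩
  · refine ⟨f, dvd_rfl, le_antisymm ?_ ?_⟩
    · exact (maximalIdeal.isMaximal A).isPrime.radical_le_iff.mpr
        ((Ideal.span_singleton_le_iff_mem _).mpr hf)
    · exact he ▸ Ideal.radical_mono (Ideal.span_singleton_le_span_singleton.mpr hfe)

end PreValuationRing

namespace Ideal

variable {A : Type*} [CommRing A] {d g : A}

lemma quotient_mk_ne_zero_of_not_isUnit [IsDomain A] (hg : g ≠ 0) (hd : ¬ IsUnit d) :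
    (Submodule.Quotient.mk g : A ⧸ span {d * g}) ≠ 0 := by
  rw [Ne, Submodule.Quotient.mk_eq_zero, mem_span_singleton, ← one_mul g,
    ← mul_assoc, mul_one, mul_dvd_mul_iff_right hg]
  exact fun h => hd (isUnit_of_dvd_one h)

lemma exists_pow_smul_quotient_mk_eq_zero {r : A} (hr : r ∈ (span {d}).radical) :
    ∃ n : ℕ, r ^ n • (Submodule.Quotient.mk g : A ⧸ span {d * g}) = 0 := by
  obtain ⟨n, hn⟩ := hr
  obtain ⟨c, hc⟩ := mem_span_singleton.mp hn
  refine ⟨n, ?_⟩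
  rw [← Submodule.Quotient.mk_smul, Submodule.Quotient.mk_eq_zero, mem_span_singleton, hc,
    smul_eq_mul]
  exact ⟨c, by ring⟩

end Ideal

lemma ModuleCat.nontrivial_colimit_of_forall_map_ne_zero {R : Type u} [Ring R] {K : Type u}
    [SmallCategory K] [IsFiltered K] (F : K ⥤ ModuleCat.{u} R) {k : K} (x : F.obj k)
    (hx : ∀ (k' : K) (w : k ⟶ k'), F.map w x ≠ 0) : Nontrivial ↑(colimit F) := by
  refine ⟨colimit.ι F k x, colimit.ι F k 0, fun h => ?_⟩
  obtain ⟨k', w, w', hw⟩ := Concrete.colimit_exists_of_rep_eq F x 0 h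
  exact hx k' w (by rw [hw, map_zero])

section ExtZero

variable {R : Type u} [CommRing R]

instance (M : ModuleCat.{u} R) :
    PreservesFiniteColimits ((linearYoneda R (ModuleCat.{u} R)).obj M).rightOp :=
  have : PreservesFiniteLimits ((linearYoneda R (ModuleCat.{u} R)).obj M ⋙ forget _) :=
    inferInstanceAs (PreservesFiniteLimits (yoneda.obj M))
  have := preservesFiniteLimits_of_reflects_of_preserves
    ((linearYoneda R (ModuleCat.{u} R)).obj M) (forget _)
  preservesFiniteColimits_rightOp _

noncomputable def ModuleCat.extZeroIsoLinearYoneda (M : ModuleCat.{u} R) :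
    (Ext R (ModuleCat.{u} R) 0).flip.obj M ≅ (linearYoneda R (ModuleCat.{u} R)).obj M :=
  let τ := ((linearYoneda R (ModuleCat.{u} R)).obj M).rightOp.leftDerivedZeroIsoSelf
  (NatIso.ofComponents (fun X => (τ.app X.unop).unop)
    (fun f => Quiver.Hom.op_inj (τ.hom.naturality f.unop).symm)).symm

end ExtZero

namespace localCohomology

variable {R : Type u} [CommRing R]

instance (J : Ideal R) : IsCofiltered (SelfLERadical J) where
  cone_objs J₁ J₂ :=
    ⟨⟨J₁.obj ⊓ J₂.obj, by rw [Ideal.radical_inf]; exact le_inf J₁.property J₂.property⟩,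
      ObjectProperty.homMk (homOfLE inf_le_left), ObjectProperty.homMk (homOfLE inf_le_right),
      trivial⟩
  cone_maps J₁ _ _ _ := ⟨J₁, 𝟙 J₁, ObjectProperty.hom_ext (h := Subsingleton.elim _ _)⟩
  nonempty := inferInstance

/-- `x` is reached from `φ : R ⧸ Ann(x) → M`, `1 ↦ x`, which stays nonzero along every
transition map `R ⧸ J → R ⧸ Ann(x)` since these send `1` to `1`. -/
lemma nontrivial_ofSelfLERadical_zero {I : Ideal R} {M : ModuleCat.{u} R} {x : M}
    (hx0 : x ≠ 0) (hx : ∀ r ∈ I, ∃ n : ℕ, r ^ n • x = 0) :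
    Nontrivial ((ofSelfLERadical I 0).obj M) := by
  let D := (ringModIdeals (selfLERadicalDiagram I)).op ⋙ (linearYoneda R (ModuleCat.{u} R)).obj M
  let J₀ : SelfLERadical I := ⟨LinearMap.ker (LinearMap.toSpanSingleton R M x), hx⟩
  let φ : (ringModIdeals (selfLERadicalDiagram I)).obj J₀ ⟶ M :=
    ModuleCat.ofHom (Submodule.liftQ _ (LinearMap.toSpanSingleton R M x) le_rfl)
  have : Nontrivial ↑(colimit D) := by
    refine ModuleCat.nontrivial_colimit_of_forall_map_ne_zero D (k := op J₀) φ fun J₁ w h => ?_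
    have hw : (ringModIdeals (selfLERadicalDiagram I)).map w.unop ≫ φ = 0 := h
    have h1 : (1 : R) • x = 0 := congr(ModuleCat.Hom.hom $hw (Submodule.Quotient.mk 1))
    exact hx0 (by rwa [one_smul] at h1)
  let e : (ofSelfLERadical I 0).obj M ≅ colimit D :=
    colimitObjIsoColimitCompEvaluation _ M ≪≫
      HasColimit.isoOfNatIso (Functor.isoWhiskerLeft _ (ModuleCat.extZeroIsoLinearYoneda M))
  exact ((forget _).mapIso e).toEquiv.nontrivial

end localCohomology

lemma lcDepth_eq_zero_of_nontrivial {A : Type} [CommRing A] {I : Ideal A}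
    {M : ModuleCat.{0} A} (h : Nontrivial ((localCohomology.ofSelfLERadical I 0).obj M)) :
    lcDepth I M = 0 := by
  refine nonpos_iff_eq_zero.mp (sSup_le fun n hn => ?_)
  by_contra! hn0
  exact not_subsingleton _ (hn 0 (by exact_mod_cast hn0))

theorem stmt_7_general (V : Type) [CommRing V] [IsDomain V] [ValuationRing V]
    (hrank : ringKrullDim V < ⊤)
    (f : V) (hf : f ∈ IsLocalRing.maximalIdeal V) (hf0 : f ≠ 0) :
    lcDepth (IsLocalRing.maximalIdeal V) (ModuleCat.of V (V ⧸ Ideal.span {f})) = 0 ∧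
    Nontrivial ((localCohomology.ofSelfLERadical (IsLocalRing.maximalIdeal V) 0).obj
      (ModuleCat.of V (V ⧸ Ideal.span {f}))) := by
  have := PreValuationRing.finite_primeSpectrum hrank
  obtain ⟨d, ⟨g, rfl⟩, hd⟩ :=
    PreValuationRing.exists_dvd_radical_span_singleton_eq_maximalIdeal hf
  have hd_unit : ¬ IsUnit d := fun hu =>
    (IsLocalRing.mem_maximalIdeal d).mp (hd ▸ Ideal.le_radical (Ideal.mem_span_singleton_self d)) hu
  have hΓ : Nontrivial ((localCohomology.ofSelfLERadical (IsLocalRing.maximalIdeal V) 0).obj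
      (ModuleCat.of V (V ⧸ Ideal.span {d * g}))) :=
    localCohomology.nontrivial_ofSelfLERadical_zero (x := Submodule.Quotient.mk g)
      (Ideal.quotient_mk_ne_zero_of_not_isUnit (right_ne_zero_of_mul hf0) hd_unit)
      fun r hr => Ideal.exists_pow_smul_quotient_mk_eq_zero (hd.symm ▸ hr)
  exact ⟨lcDepth_eq_zero_of_nontrivial hΓ, hΓ⟩

/-- A non-discrete valuation ring `V` of finite rank and a nonzero `f ∈ 𝔪_V` satisfy
`depth_V(V/fV) = 0`; concretely, `Γ_{𝔪_V}(V/fV) ≠ 0`. -/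
theorem stmt_7 (V : Type) [CommRing V] [IsDomain V] [ValuationRing V]
    (hrank : ringKrullDim V < ⊤)
    (hnd : ¬ IsDiscreteValuationRing V)
    (f : V) (hf : f ∈ IsLocalRing.maximalIdeal V) (hf0 : f ≠ 0) :
    lcDepth (IsLocalRing.maximalIdeal V) (ModuleCat.of V (V ⧸ Ideal.span {f})) = 0 ∧
    Nontrivial ((localCohomology.ofSelfLERadical (IsLocalRing.maximalIdeal V) 0).obj
      (ModuleCat.of V (V ⧸ Ideal.span {f}))) :=
  stmt_7_general V hrank f hf hf0
end

section
/- Let A be a ring, M a finitely presented A-module, and N any A-module. Then the set of weakly associated primes of Hom_A(M, N) equals the intersection of the support of M with the set of weakly associated primes of N: Ass_A(Hom_A(M,N)) = Supp(M) ∩ Ass_A(N). -/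
open CategoryTheory

/-- The weakly associated primes of a module: primes minimal over the annihilator
of some element. -/
def weakAssPrimes (A : Type) [CommRing A] (M : Type) [AddCommGroup M] [Module A M] :
    Set (PrimeSpectrum A) :=
  {p | ∃ x : M, p.asIdeal ∈ (Submodule.span A {x}).annihilator.minimalPrimes}

/-!
If `p` is minimal over `Ann φ` for `φ : M → N`, then `p ⊇ Ann φ ⊇ Ann M`, so `p ∈ Supp M`; since
`Ann φ = ⋂ᵢ Ann (φ mᵢ)` for finitely many generators `mᵢ` of `M`, the prime `p` contains, and is
then minimal over, one of the `Ann (φ mᵢ)`.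

Conversely, being weakly associated is detected at `A_p`, and `Hom` commutes with localization
because `M` is finitely presented, so we may assume `A` local with `p = 𝔪`. If `𝔪` is minimal over
`J = Ann x`, then `√J = 𝔪`. In a minimal presentation of `M` all coordinates of relations lie in
`𝔪`, hence in a finitely generated ideal `I ⊆ √J`. With `k` least such that `I ^ k ⊆ J`, any
`c ∈ I ^ (k - 1) \ J` kills `I` modulo `J`, so a coordinate function times `c` descends to a nonzero
map `M → A ⧸ J ≅ A ∙ x ⊆ N`, whose annihilator lies between `J` and `𝔪`.
-/

open IsLocalRing

section Ideals

variable {R : Type*} [CommSemiring R]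

lemma Ideal.mem_minimalPrimes_of_le_of_le {p I I' : Ideal R} (hp : p ∈ I.minimalPrimes)
    (hII' : I ≤ I') (hI'p : I' ≤ p) : p ∈ I'.minimalPrimes :=
  ⟨⟨hp.1.1, hI'p⟩, fun _ hq hqp => hp.2 ⟨hq.1, hII'.trans hq.2⟩ hqp⟩

lemma IsLocalRing.maximalIdeal_mem_minimalPrimes_iff [IsLocalRing R] {I : Ideal R} :
    maximalIdeal R ∈ I.minimalPrimes ↔ I.radical = maximalIdeal R := by
  constructor
  · intro hm
    refine le_antisymm (((maximalIdeal.isMaximal R).isPrime.radical_le_iff).mpr hm.1.2) ?_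
    rw [Ideal.radical_eq_sInf]
    exact le_sInf fun q ⟨hIq, hq⟩ => hm.2 ⟨hq, hIq⟩ (le_maximalIdeal hq.ne_top)
  · intro h
    rw [← Ideal.radical_minimalPrimes, h, Ideal.minimalPrimes_eq_subsingleton_self]
    rfl

lemma Ideal.exists_notMem_forall_mul_mem_of_le_radical {I J : Ideal R} (hJ : J ≠ ⊤)
    (hI : I.FG) (hIJ : I ≤ J.radical) : ∃ c ∉ J, ∀ a ∈ I, c * a ∈ J := by
  obtain ⟨k, hk⟩ := Ideal.exists_pow_le_of_le_radical_of_fg hIJ hI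
  induction k with
  | zero => exact absurd (top_le_iff.mp (by simpa using hk)) hJ
  | succ k ih =>
    by_cases hkJ : I ^ k ≤ J
    · exact ih hkJ
    · obtain ⟨c, hcI, hcJ⟩ := SetLike.not_le_iff_exists.mp hkJ
      exact ⟨c, hcJ, fun a ha => hk (pow_succ I k ▸ Ideal.mul_mem_mul hcI ha)⟩

end Ideals

section Presentation

variable {R M : Type*} [CommRing R] [AddCommGroup M] [Module R M]

lemma LinearMap.exists_comp_eq_of_ker_le {N P : Type*} [AddCommGroup N] [Module R N]
    [AddCommGroup P] [Module R P] {π : M →ₗ[R] N} (hπ : Function.Surjective π) (f : M →ₗ[R] P)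
    (h : LinearMap.ker π ≤ LinearMap.ker f) : ∃ g : N →ₗ[R] P, g ∘ₗ π = f :=
  ⟨(LinearMap.ker π).liftQ f h ∘ₗ (π.quotKerEquivOfSurjective hπ).symm, by
    ext x; simp [LinearMap.quotKerEquivOfSurjective_symm_apply]⟩

lemma exists_surjective_of_isUnit_apply_mem_ker {n : ℕ} {π : (Fin (n + 1) → R) →ₗ[R] M}
    (hπ : Function.Surjective π) {v : Fin (n + 1) → R} (hv : v ∈ LinearMap.ker π)
    {i : Fin (n + 1)} (hi : IsUnit (v i)) : ∃ σ : (Fin n → R) →ₗ[R] M, Function.Surjective σ := by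
  -- `π w = π (w - (w i / v i) • v)`, and the right-hand vector has `i`-th coordinate zero.
  set σ := Fintype.linearCombination R fun j => π fun k => if i.succAbove j = k then 1 else 0
  have hσ : ∀ u, u i = 0 → π u = σ fun j => u (i.succAbove j) := by
    intro u hu
    rw [π.pi_apply_eq_sum_univ, Fin.sum_univ_succAbove _ i, hu, zero_smul, zero_add,
      Fintype.linearCombination_apply]
  refine ⟨σ, fun m => ?_⟩
  obtain ⟨w, rfl⟩ := hπ m
  refine ⟨fun j => (w - (w i * hi.unit⁻¹) • v) (i.succAbove j), ?_⟩
  rw [← hσ, map_sub, map_smul, LinearMap.mem_ker.mp hv, smul_zero, sub_zero]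
  simp [mul_assoc]

lemma IsLocalRing.exists_surjective_forall_mem_ker_mem_maximalIdeal [IsLocalRing R]
    [Module.Finite R M] : ∃ (n : ℕ) (π : (Fin n → R) →ₗ[R] M), Function.Surjective π ∧
      ∀ v ∈ LinearMap.ker π, ∀ i, v i ∈ maximalIdeal R := by
  obtain ⟨n, π, hπ⟩ := Module.Finite.exists_fin' R M
  induction n with
  | zero => exact ⟨0, π, hπ, fun _ _ i => i.elim0⟩
  | succ n ih =>
    by_cases hker : ∀ v ∈ LinearMap.ker π, ∀ i, v i ∈ maximalIdeal R
    · exact ⟨n + 1, π, hπ, hker⟩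
    · push Not at hker
      obtain ⟨v, hv, i, hvi⟩ := hker
      obtain ⟨σ, hσ⟩ :=
        exists_surjective_of_isUnit_apply_mem_ker hπ hv (notMem_maximalIdeal.mp hvi)
      exact ih σ hσ

lemma IsLocalRing.exists_linearMap_quotient_ne_zero [IsLocalRing R]
    [Module.FinitePresentation R M] [Nontrivial M] {J : Ideal R} (hJ : J.radical = maximalIdeal R) :
    ∃ φ : M →ₗ[R] R ⧸ J, φ ≠ 0 := by
  obtain ⟨n, π, hπ, hker⟩ := exists_surjective_forall_mem_ker_mem_maximalIdeal (R := R) (M := M)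
  have hJtop : J ≠ ⊤ := fun h =>
    (maximalIdeal.isMaximal R).ne_top (by rw [← hJ, h, Ideal.radical_top])
  let I : Ideal R := ⨆ k, (LinearMap.ker π).map (LinearMap.proj k)
  have hIfg : I.FG :=
    Submodule.fg_iSup _ fun k => (Module.FinitePresentation.fg_ker π hπ).map _
  have hIJ : I ≤ J.radical :=
    hJ ▸ iSup_le fun k => Submodule.map_le_iff_le_comap.mpr fun v hv => hker v hv k
  obtain ⟨c, hcJ, hc⟩ := Ideal.exists_notMem_forall_mul_mem_of_le_radical hJtop hIfg hIJ
  obtain ⟨k⟩ : Nonempty (Fin n) := by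
    by_contra h
    rw [not_nonempty_iff] at h
    exact not_subsingleton M hπ.subsingleton
  let φ₀ : (Fin n → R) →ₗ[R] R ⧸ J := J.mkQ ∘ₗ (c • LinearMap.proj k)
  have hφ₀ : LinearMap.ker π ≤ LinearMap.ker φ₀ := fun v hv => by
    simpa [φ₀, ← map_mul, Ideal.Quotient.eq_zero_iff_mem] using
      hc _ (Submodule.mem_iSup_of_mem k (Submodule.mem_map_of_mem hv))
  obtain ⟨φ, hφ⟩ := LinearMap.exists_comp_eq_of_ker_le hπ φ₀ hφ₀
  refine ⟨φ, fun h0 => hcJ ?_⟩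
  simpa [φ₀, h0, Ideal.Quotient.eq_zero_iff_mem] using
    (LinearMap.congr_fun hφ (Pi.single k 1)).symm

end Presentation

section Localization

variable {A : Type*} [CommRing A] (S : Submonoid A) {R' : Type*} [CommRing R'] [Algebra A R']
  {L L' : Type*} [AddCommGroup L] [Module A L] [AddCommGroup L'] [Module A L'] [Module R' L']
  [IsScalarTower A R' L'] (f : L →ₗ[A] L')

lemma IsLocalizedModule.annihilator_span_singleton_apply [IsLocalization S R']
    [IsLocalizedModule S f] (y : L) :
    (Submodule.span R' {f y}).annihilator =
      (Submodule.span A {y}).annihilator.map (algebraMap A R') := by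
  refine le_antisymm (fun b hb => ?_) (Ideal.map_le_iff_le_comap.mpr fun a ha => ?_)
  · rw [Submodule.mem_annihilator_span_singleton] at hb
    obtain ⟨⟨a, t⟩, hat⟩ := IsLocalization.surj S b
    have hfa : f (a • y) = 0 := by
      rw [map_smul, ← algebraMap_smul R', ← hat, mul_comm, mul_smul, hb, smul_zero]
    obtain ⟨u, hu⟩ := (IsLocalizedModule.eq_zero_iff S f).mp hfa
    rw [IsLocalization.mem_map_algebraMap_iff S]
    refine ⟨⟨⟨u * a, ?_⟩, u * t⟩, ?_⟩
    · rw [Submodule.mem_annihilator_span_singleton, mul_smul]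
      exact hu
    · simp only [Submonoid.coe_mul, map_mul, ← hat]
      ring
  · rw [Ideal.mem_comap, Submodule.mem_annihilator_span_singleton, algebraMap_smul, ← map_smul,
      (Submodule.mem_annihilator_span_singleton _ _).mp ha, map_zero]

lemma IsLocalizedModule.exists_span_singleton_apply_eq [IsLocalization S R']
    [IsLocalizedModule S f] (y' : L') :
    ∃ y : L, Submodule.span R' {f y} = Submodule.span R' {y'} := by
  obtain ⟨⟨y, s⟩, hs⟩ := IsLocalizedModule.surj S f y'
  refine ⟨y, ?_⟩
  rw [← hs, Submonoid.smul_def, ← algebraMap_smul R',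
    Submodule.span_singleton_smul_eq (IsLocalization.map_units R' s)]

end Localization

theorem mem_weakAssPrimes_iff_closedPoint_mem {A : Type} [CommRing A] (p : PrimeSpectrum A)
    {L L' : Type} [AddCommGroup L] [Module A L] [AddCommGroup L'] [Module A L']
    [Module (Localization.AtPrime p.asIdeal) L']
    [IsScalarTower A (Localization.AtPrime p.asIdeal) L'] (f : L →ₗ[A] L')
    [IsLocalizedModule p.asIdeal.primeCompl f] :
    p ∈ weakAssPrimes A L ↔
      closedPoint (Localization.AtPrime p.asIdeal) ∈
        weakAssPrimes (Localization.AtPrime p.asIdeal) L' := by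
  have key (y : L) : maximalIdeal (Localization.AtPrime p.asIdeal) ∈
      (Submodule.span (Localization.AtPrime p.asIdeal) {f y}).annihilator.minimalPrimes ↔
        p.asIdeal ∈ (Submodule.span A {y}).annihilator.minimalPrimes := by
    rw [IsLocalizedModule.annihilator_span_singleton_apply p.asIdeal.primeCompl f,
      IsLocalization.minimalPrimes_map p.asIdeal.primeCompl, Set.mem_preimage,
      IsLocalization.AtPrime.under_maximalIdeal (Localization.AtPrime p.asIdeal) p.asIdeal]
  constructor
  · rintro ⟨y, hy⟩
    exact ⟨f y, (key y).mpr hy⟩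
  · rintro ⟨y', hy'⟩
    obtain ⟨y, hy⟩ := IsLocalizedModule.exists_span_singleton_apply_eq p.asIdeal.primeCompl f
      (R' := Localization.AtPrime p.asIdeal) y'
    exact ⟨y, (key y).mp (hy ▸ hy')⟩

theorem IsLocalRing.closedPoint_mem_weakAssPrimes_linearMap {R : Type} [CommRing R]
    [IsLocalRing R] {M N : Type} [AddCommGroup M] [Module R M] [AddCommGroup N] [Module R N]
    [Module.FinitePresentation R M] [Nontrivial M] (hN : closedPoint R ∈ weakAssPrimes R N) :
    closedPoint R ∈ weakAssPrimes R (M →ₗ[R] N) := by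
  obtain ⟨x, hx⟩ := hN
  rw [Ideal.annihilator_span_singleton_eq_torsionOf] at hx
  obtain ⟨ψ, hψ⟩ :=
    exists_linearMap_quotient_ne_zero (M := M) (maximalIdeal_mem_minimalPrimes_iff.mp hx)
  let ι : R ⧸ Ideal.torsionOf R N x →ₗ[R] N :=
    (Submodule.span R {x}).subtype ∘ₗ (Ideal.quotTorsionOfEquivSpanSingleton R N x).toLinearMap
  have hι : Function.Injective ι := (Submodule.injective_subtype _).comp (LinearEquiv.injective _)
  have hΦ : ι ∘ₗ ψ ≠ 0 := fun h =>
    hψ (LinearMap.ext fun z => hι (by simpa using LinearMap.congr_fun h z))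
  refine ⟨ι ∘ₗ ψ, Ideal.mem_minimalPrimes_of_le_of_le hx (fun a ha => ?_) (le_maximalIdeal ?_)⟩
  · rw [Submodule.mem_annihilator_span_singleton]
    ext z
    have hψz : a • ψ z = 0 := Module.mem_annihilator.mp (by rwa [Ideal.annihilator_quotient]) _
    rw [LinearMap.smul_apply, LinearMap.comp_apply, ← map_smul, hψz, map_zero,
      LinearMap.zero_apply]
  · rwa [ne_eq, Submodule.annihilator_eq_top_iff, Submodule.span_singleton_eq_bot]

section LinearMap

variable {A : Type} [CommRing A] {M N : Type} [AddCommGroup M] [Module A M] [AddCommGroup N]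
  [Module A N] [Module.Finite A M] {p : PrimeSpectrum A}

theorem mem_support_of_mem_weakAssPrimes_linearMap (hp : p ∈ weakAssPrimes A (M →ₗ[A] N)) :
    p ∈ Module.support A M := by
  obtain ⟨φ, hφ⟩ := hp
  rw [Module.mem_support_iff_of_finite]
  refine le_trans (fun a ha => ?_) hφ.1.2
  rw [Submodule.mem_annihilator_span_singleton]
  ext m
  rw [LinearMap.smul_apply, ← map_smul, Module.mem_annihilator.mp ha m, map_zero,
    LinearMap.zero_apply]

theorem mem_weakAssPrimes_of_mem_weakAssPrimes_linearMap
    (hp : p ∈ weakAssPrimes A (M →ₗ[A] N)) : p ∈ weakAssPrimes A N := by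
  obtain ⟨φ, hφ⟩ := hp
  obtain ⟨n, s, hs⟩ := Module.Finite.exists_fin (R := A) (M := M)
  have hann : (Submodule.span A {φ}).annihilator =
      Finset.univ.inf fun i => (Submodule.span A {φ (s i)}).annihilator := by
    ext a
    simp only [Submodule.mem_annihilator_span_singleton, Finset.inf_eq_iInf, Submodule.mem_iInf,
      Finset.mem_univ, forall_const]
    exact ⟨fun h i => by rw [← LinearMap.smul_apply, h, LinearMap.zero_apply],
      fun h => LinearMap.ext_on_range hs h⟩
  obtain ⟨i, -, hi⟩ := p.isPrime.inf_le'.mp (hann ▸ hφ.1.2)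
  exact ⟨φ (s i),
    Ideal.mem_minimalPrimes_of_le_of_le hφ (hann ▸ Finset.inf_le (Finset.mem_univ i)) hi⟩

end LinearMap

/-- For a finitely presented module `M` and an arbitrary module `N`,
`Ass(Hom_A(M, N)) = Supp(M) ∩ Ass(N)` (weakly associated primes). -/
theorem stmt_9 (A : Type) [CommRing A]
    (M N : Type) [AddCommGroup M] [Module A M] [AddCommGroup N] [Module A N]
    [Module.FinitePresentation A M] :
    weakAssPrimes A (M →ₗ[A] N) = Module.support A M ∩ weakAssPrimes A N := by
  ext p
  constructor
  · intro hp
    exact ⟨mem_support_of_mem_weakAssPrimes_linearMap hp,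
      mem_weakAssPrimes_of_mem_weakAssPrimes_linearMap hp⟩
  · rintro ⟨hM, hN⟩
    have : Nontrivial (LocalizedModule p.asIdeal.primeCompl M) := Module.mem_support_iff.mp hM
    rw [mem_weakAssPrimes_iff_closedPoint_mem p (LocalizedModule.map p.asIdeal.primeCompl)]
    exact closedPoint_mem_weakAssPrimes_linearMap <|
      (mem_weakAssPrimes_iff_closedPoint_mem p (LocalizedModule.mkLinearMap _ N)).mp hN
end

section
/- Let (A, m) be a local ring, M a finitely presented nonzero A-module, and N a nonzero A-module with Supp(N) = {m}. Then Hom_A(M, N) ≠ 0. -/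
/-!
Choose a generating family `v₁, …, vₙ` of `M` of minimal length; then every relation
`∑ cⱼ vⱼ = 0` has all its coefficients in `𝔪`. Since `M` is finitely presented, finitely many
relations generate all of them, so their coefficients at a fixed index span a finitely
generated ideal `J ≤ 𝔪`, and the projection to that coordinate mod `J` descends to a
surjection `M → A ⧸ J`. On the other side, a finitely generated `J ≤ 𝔪` kills every element
of `N` up to a power, because `Supp N = {𝔪}`; so `N` has a nonzero element `y` killed by `J`
itself, and `M → A ⧸ J → N`, `1 ↦ y`, is nonzero.
-/

open Submodule IsLocalRing

theorem Module.Finite.exists_fin_irredundant_generating_family (A M : Type*) [Semiring A]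
    [AddCommMonoid M] [Module A M] [Module.Finite A M] :
    ∃ (n : ℕ) (v : Fin n → M), span A (Set.range v) = ⊤ ∧ ∀ i, v i ∉ span A (v '' {i}ᶜ) := by
  obtain ⟨n, ⟨v, hv⟩, hmin⟩ :=
    WellFounded.has_min Nat.lt_wfRel.wf {n | ∃ v : Fin n → M, span A (Set.range v) = ⊤}
      Module.Finite.exists_fin
  refine ⟨n, v, hv, fun i hi => ?_⟩
  cases n with
  | zero => exact i.elim0
  | succ m =>
    refine hmin m ⟨v ∘ i.succAbove, top_le_iff.mp ?_⟩ m.lt_succ_self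
    rw [← hv, Set.range_comp, Fin.range_succAbove, span_le]
    rintro _ ⟨j, rfl⟩
    rcases eq_or_ne j i with rfl | hji
    · exact hi
    · exact subset_span ⟨j, hji, rfl⟩

theorem IsLocalRing.mem_maximalIdeal_of_sum_smul_eq_zero {A M ι : Type*} [CommRing A]
    [IsLocalRing A] [AddCommGroup M] [Module A M] [Fintype ι] {v : ι → M}
    (hv : ∀ i, v i ∉ span A (v '' {i}ᶜ)) {c : ι → A} (hc : ∑ j, c j • v j = 0) (i : ι) :
    c i ∈ maximalIdeal A := by
  classical
  by_contra hci
  have hu : IsUnit (c i) := by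
    rwa [mem_maximalIdeal, mem_nonunits_iff, not_not] at hci
  refine hv i ((smul_mem_iff_of_isUnit _ hu).mp ?_)
  rw [Fintype.sum_eq_add_sum_compl i, add_eq_zero_iff_eq_neg] at hc
  rw [hc]
  refine neg_mem (sum_mem fun j hj => smul_mem _ _ (subset_span ⟨j, ?_, rfl⟩))
  simpa using hj

theorem LinearMap.exists_comp_eq_of_ker_le_s10 {R M₁ M₂ M₃ : Type*} [Ring R] [AddCommGroup M₁]
    [Module R M₁] [AddCommGroup M₂] [Module R M₂] [AddCommGroup M₃] [Module R M₃]
    {π : M₁ →ₗ[R] M₂} (hπ : Function.Surjective π) {φ : M₁ →ₗ[R] M₃} (hle : ker π ≤ ker φ) :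
    ∃ f : M₂ →ₗ[R] M₃, f ∘ₗ π = φ :=
  ⟨(ker π).liftQ φ hle ∘ₗ (π.quotKerEquivOfSurjective hπ).symm.toLinearMap, by
    ext x
    rw [comp_apply, comp_apply, LinearEquiv.coe_coe, ← quotKerEquivOfSurjective_apply_mk π hπ,
      LinearEquiv.symm_apply_apply, liftQ_apply]⟩

theorem IsLocalRing.exists_fg_le_maximalIdeal_surjective_to_quotient (A M : Type*) [CommRing A]
    [IsLocalRing A] [AddCommGroup M] [Module A M] [Module.FinitePresentation A M]
    [Nontrivial M] :
    ∃ J : Ideal A, J.FG ∧ J ≤ maximalIdeal A ∧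
      ∃ f : M →ₗ[A] A ⧸ J, Function.Surjective f := by
  obtain ⟨n, v, hspan, hirr⟩ := Module.Finite.exists_fin_irredundant_generating_family A M
  obtain ⟨i₀⟩ : Nonempty (Fin n) := by
    by_contra h
    rw [not_nonempty_iff, ← Set.range_eq_empty_iff (f := v)] at h
    rw [h, span_empty] at hspan
    exact bot_ne_top hspan
  let π := Fintype.linearCombination A v
  have hπ : Function.Surjective π := by
    rw [← LinearMap.range_eq_top, Fintype.range_linearCombination, hspan]
  obtain ⟨T, hT⟩ := Module.FinitePresentation.fg_ker π hπ
  let J : Ideal A := Ideal.span ((fun t : Fin n → A => t i₀) '' T)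
  refine ⟨J, fg_span (T.finite_toSet.image _), Ideal.span_le.mpr ?_, ?_⟩
  · rintro _ ⟨t, ht, rfl⟩
    have hrel : π t = 0 := by rw [← LinearMap.mem_ker, ← hT]; exact subset_span ht
    exact mem_maximalIdeal_of_sum_smul_eq_zero hirr hrel i₀
  let φ : (Fin n → A) →ₗ[A] A ⧸ J := J.mkQ ∘ₗ LinearMap.proj i₀
  have hφ : Function.Surjective φ := fun q => by
    obtain ⟨a, rfl⟩ := J.mkQ_surjective q
    exact ⟨Pi.single i₀ a, by simp [φ]⟩
  have hle : LinearMap.ker π ≤ LinearMap.ker φ := by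
    rw [← hT, span_le]
    intro t ht
    have ht₀ : t i₀ ∈ J := Ideal.subset_span ⟨t, ht, rfl⟩
    simpa [φ, Ideal.Quotient.eq_zero_iff_mem] using ht₀
  obtain ⟨f, hf⟩ := LinearMap.exists_comp_eq_of_ker_le_s10 hπ hle
  refine ⟨f, Function.Surjective.of_comp (g := π) ?_⟩
  rwa [← LinearMap.coe_comp, hf]

theorem exists_ne_zero_forall_smul_eq_zero_of_pow_smul_eq_zero {A N : Type*} [CommSemiring A]
    [AddCommMonoid N] [Module A N] (J : Ideal A) {x : N} (hx : x ≠ 0) {e : ℕ}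
    (he : ∀ a ∈ J ^ e, a • x = 0) :
    ∃ y : N, y ≠ 0 ∧ ∀ a ∈ J, a • y = 0 := by
  induction e with
  | zero => exact absurd (by simpa using he 1 (by simp)) hx
  | succ e ih =>
    by_cases hJe : ∀ a ∈ J ^ e, a • x = 0
    · exact ih hJe
    push Not at hJe
    obtain ⟨c, hc, hcx⟩ := hJe
    refine ⟨c • x, hcx, fun a ha => ?_⟩
    rw [smul_smul, mul_comm]
    exact he _ (pow_succ J e ▸ Ideal.mul_mem_mul hc ha)

theorem Module.exists_ne_zero_forall_smul_eq_zero_of_support_subset_zeroLocus {A N : Type*}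
    [CommRing A] [AddCommGroup N] [Module A N] [Nontrivial N] {J : Ideal A} (hJ : J.FG)
    (hN : Module.support A N ⊆ PrimeSpectrum.zeroLocus J) :
    ∃ y : N, y ≠ 0 ∧ ∀ a ∈ J, a • y = 0 := by
  obtain ⟨x, hx⟩ := exists_ne (0 : N)
  have hrad : J ≤ (A ∙ x).annihilator.radical :=
    (PrimeSpectrum.zeroLocus_subset_zeroLocus_iff _ _).mp fun p hp =>
      hN (mem_support_iff_exists_annihilator.mpr ⟨x, hp⟩)
  obtain ⟨e, he⟩ := Ideal.exists_pow_le_of_le_radical_of_fg hrad hJ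
  exact exists_ne_zero_forall_smul_eq_zero_of_pow_smul_eq_zero J hx fun a ha =>
    (mem_annihilator_span_singleton x a).mp (he ha)

/-- For a local ring `A`, a finitely presented nonzero module `M`, and a nonzero module
`N` supported on the closed point, `Hom_A(M, N) ≠ 0`. -/
theorem stmt_10 (A : Type) [CommRing A] [IsLocalRing A]
    (M N : Type) [AddCommGroup M] [Module A M] [AddCommGroup N] [Module A N]
    [Module.FinitePresentation A M] [Nontrivial M] [Nontrivial N]
    (hN : Module.support A N = {IsLocalRing.closedPoint A}) :
    Nontrivial (M →ₗ[A] N) := by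
  obtain ⟨J, hJfg, hJm, f, hf⟩ := exists_fg_le_maximalIdeal_surjective_to_quotient A M
  have hsupp : Module.support A N ⊆ PrimeSpectrum.zeroLocus J := by
    rw [hN, Set.singleton_subset_iff]
    exact hJm
  obtain ⟨y, hy, hJy⟩ := Module.exists_ne_zero_forall_smul_eq_zero_of_support_subset_zeroLocus
    hJfg hsupp
  obtain ⟨g, hg⟩ : ∃ g : (A ⧸ J) →ₗ[A] N, g (Submodule.Quotient.mk 1) = y :=
    ⟨J.liftQ (LinearMap.toSpanSingleton A N y) fun a ha => LinearMap.mem_ker.mpr (hJy a ha),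
      by rw [liftQ_apply, LinearMap.toSpanSingleton_apply, one_smul]⟩
  obtain ⟨x, hx⟩ := hf (Submodule.Quotient.mk 1)
  refine nontrivial_of_ne (g ∘ₗ f) 0 fun h => hy ?_
  rw [← hg, ← hx, ← LinearMap.comp_apply, h, LinearMap.zero_apply]
end

section
/- Let R be a coherent domain. Then R is normal (integrally closed in its fraction field) if and only if R equals the intersection, inside Frac(R), of those localizations R_p that are valuation rings. -/
open IsLocalization Submodule

theorem IsCoherentRing.inf_span_singleton_fg {R : Type} [CommRing R] (hR : IsCoherentRing R)
    (a b : R) : (Ideal.span {a} ⊓ Ideal.span {b}).FG := by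
  let f : (Fin 2 → R) →ₗ[R] R := a • LinearMap.proj 0 + b • LinearMap.proj 1
  have hf : ∀ v, f v = a * v 0 + b * v 1 := fun _ => rfl
  have : Module.FinitePresentation R (LinearMap.range f) :=
    hR _ (by rw [LinearMap.range_eq_map]; exact Module.Finite.fg_top.map f)
  have hker : (LinearMap.ker f).FG := by
    rw [← LinearMap.ker_rangeRestrict]
    exact Module.FinitePresentation.fg_ker _ f.surjective_rangeRestrict
  -- `(u, v) ↦ a u` maps the syzygies `a u + b v = 0` onto `(a) ∩ (b)`.
  suffices hmap : (LinearMap.ker f).map (a • LinearMap.proj 0) = Ideal.span {a} ⊓ Ideal.span {b} by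
    exact hmap ▸ hker.map _
  apply le_antisymm
  · rintro _ ⟨v, hv, rfl⟩
    rw [SetLike.mem_coe, LinearMap.mem_ker, hf] at hv
    refine ⟨Ideal.mem_span_singleton'.mpr ⟨v 0, mul_comm _ _⟩,
      Ideal.mem_span_singleton'.mpr ⟨-v 1, ?_⟩⟩
    change -v 1 * b = a * v 0
    linear_combination -hv
  · rintro z ⟨hza, hzb⟩
    obtain ⟨u, rfl⟩ := Ideal.mem_span_singleton'.mp hza
    obtain ⟨w, hw⟩ := Ideal.mem_span_singleton'.mp hzb
    refine ⟨![u, -w], ?_, ?_⟩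
    · rw [SetLike.mem_coe, LinearMap.mem_ker, hf]
      simp only [Matrix.cons_val_zero, Matrix.cons_val_one]
      linear_combination -hw
    · change a * u = u * a
      ring

namespace Ideal

variable {R : Type*} [CommRing R] (K : Type*) [CommRing K] [Algebra R K]

/-- A Glaz–Vasconcelos ideal. Here `1 / coeSubmodule K J` is the dual `(R :_K J)`, which always
contains `R`. -/
def IsGV (J : Ideal R) : Prop :=
  J.FG ∧ 1 / coeSubmodule K J ≤ 1

def IsGVFree (q : Ideal R) : Prop :=
  ∀ J ≤ q, ¬ J.IsGV K

variable {K}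

theorem isGV_top : (⊤ : Ideal R).IsGV K := by
  refine ⟨⟨{1}, by simp⟩, fun x hx => ?_⟩
  rw [coeSubmodule_top] at hx
  simpa using hx 1 (one_le.mp le_rfl)

theorem IsGV.mul {J₁ J₂ : Ideal R} (h₁ : J₁.IsGV K) (h₂ : J₂.IsGV K) : (J₁ * J₂).IsGV K := by
  refine ⟨h₁.1.mul h₂.1, ?_⟩
  set D := 1 / coeSubmodule K (J₁ * J₂)
  have hD : D * coeSubmodule K J₂ * coeSubmodule K J₁ ≤ 1 := by
    rw [mul_assoc, mul_comm (coeSubmodule K J₂), ← coeSubmodule_mul]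
    exact (mul_comm D _).le.trans mul_one_div_le_one
  have : D * coeSubmodule K J₂ ≤ 1 := (le_div_iff_mul_le.mpr hD).trans h₁.2
  exact (le_div_iff_mul_le.mpr this).trans h₂.2

theorem isOka_not_isGVFree : IsOka fun I : Ideal R => ¬ I.IsGVFree K where
  top := fun h => h ⊤ le_rfl isGV_top
  oka {I a} h₁ h₂ := by
    simp only [IsGVFree, not_forall, not_not] at h₁ h₂ ⊢
    obtain ⟨J₁, hJ₁, hJ₁GV⟩ := h₁
    obtain ⟨J₂, hJ₂, hJ₂GV⟩ := h₂
    refine ⟨J₁ * J₂, (mul_mono hJ₁ hJ₂).trans ?_, hJ₁GV.mul hJ₂GV⟩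
    rw [sup_mul]
    refine sup_le mul_le_left (mul_le.mpr fun r hr s hs => ?_)
    obtain ⟨c, rfl⟩ := mem_span_singleton'.mp hr
    rw [mem_colon_span_singleton] at hs
    simpa only [mul_comm, mul_left_comm] using I.mul_mem_left c hs

theorem IsGVFree.sSup {c : Set (Ideal R)} (hne : c.Nonempty) (hc : IsChain (· ≤ ·) c)
    (h : ∀ q ∈ c, q.IsGVFree K) : (sSup c).IsGVFree K := by
  intro J hJ hGV
  obtain ⟨q, hq, hJq⟩ := (CompleteLattice.isCompactElement_iff_le_of_directed_sSup_le _ _).mp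
    ((fg_iff_compact J).mp hGV.1) c hne hc.directedOn hJ
  exact h q hq J hJq hGV

theorem isGVFree_colon_singleton {x : K} (hx : x ∉ (1 : Submodule R K)) :
    ((1 : Submodule R K).colon {x}).IsGVFree K := fun J hJ hGV =>
  hx <| hGV.2 fun _ ⟨j, hj, hjy⟩ => by
    rw [← hjy, Algebra.linearMap_apply, mul_comm, ← Algebra.smul_def]
    exact mem_colon_singleton.mp (hJ hj)

theorem exists_isPrime_isGVFree_le {I : Ideal R} (hI : I.IsGVFree K) :
    ∃ p : Ideal R, p.IsPrime ∧ p.IsGVFree K ∧ I ≤ p := by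
  obtain ⟨p, hIp, hp⟩ := zorn_le_nonempty₀ {q : Ideal R | q.IsGVFree K}
    (fun c hcS hc y hy => ⟨sSup c, IsGVFree.sSup ⟨y, hy⟩ hc hcS, fun _ => le_sSup⟩) I hI
  exact ⟨p, isOka_not_isGVFree.isPrime_of_maximal_not (by simpa using hp), hp.prop, hIp⟩

end Ideal

section

variable {R : Type*} [CommRing R] {A : Type*} [CommRing A] [Algebra R A]

theorem Submodule.mem_one_div_span_pair {x y u : A} :
    u ∈ 1 / span R {x, y} ↔ u * x ∈ (1 : Submodule R A) ∧ u * y ∈ (1 : Submodule R A) := by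
  change span R {x, y} ≤ (1 : Submodule R A).comap (LinearMap.mulLeft R u) ↔ _
  simp only [span_le, Set.insert_subset_iff, Set.singleton_subset_iff, SetLike.mem_coe, mem_comap,
    LinearMap.mulLeft_apply]

theorem IsLocalization.exists_coeSubmodule_eq {N : Submodule R A} (hN : N ≤ 1) :
    ∃ I : Ideal R, coeSubmodule A I = N :=
  ⟨N.comap (Algebra.linearMap R A), by
    rw [coeSubmodule, map_comap_eq, ← one_eq_range, inf_eq_right.mpr hN]⟩

end

section

variable {R : Type*} [CommRing R] {K : Type*} [Field K] [Algebra R K] [IsFractionRing R K]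

theorem Submodule.one_div_mul_one_div_le_one [IsIntegrallyClosed R] {J : Submodule R K}
    (hJ : J ≤ 1) (hfg : (1 / J).FG) : 1 / (J * (1 / J)) ≤ 1 := by
  intro x hx
  have hxD : ∀ u ∈ 1 / J, x • u ∈ 1 / J := fun u hu j hj => by
    rw [smul_eq_mul, mul_assoc, mul_comm u]
    exact hx _ (mul_mem_mul hj hu)
  have hD : 1 / J ≠ ⊥ := (Submodule.ne_bot_iff _).mpr ⟨1, one_mem_div.mpr hJ, one_ne_zero⟩
  obtain ⟨y, rfl⟩ :=
    IsIntegrallyClosed.isIntegral_iff.mp (isIntegral_of_smul_mem_submodule _ hD hfg x hxD)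
  exact mem_one.mpr ⟨y, rfl⟩

theorem Ideal.IsGVFree.not_mul_one_div_le [IsIntegrallyClosed R] {p : Ideal R}
    (hp : p.IsGVFree K) {J : Submodule R K} (hJ : J ≤ 1) (hJfg : J.FG) (hD : (1 / J).FG) :
    ¬ J * (1 / J) ≤ coeSubmodule K p := by
  obtain ⟨I, hI⟩ := exists_coeSubmodule_eq (mul_one_div_le_one (I := J))
  have hIGV : I.IsGV K := by
    refine ⟨(coeSubmodule_fg _ (IsFractionRing.injective R K) I).mp ?_, ?_⟩ <;> rw [hI]
    exacts [hJfg.mul hD, one_div_mul_one_div_le_one hJ hD]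
  exact fun hle => hp I (IsFractionRing.coeSubmodule_le_coeSubmodule.mp (hI ▸ hle)) hIGV

theorem fg_one_div_coeSubmodule_span_pair [IsDomain R] {a b : R}
    (h : (Ideal.span {a} ⊓ Ideal.span {b}).FG) (ha : a ≠ 0) (hb : b ≠ 0) :
    (1 / coeSubmodule K (Ideal.span {a, b})).FG := by
  have ha' : algebraMap R K a ≠ 0 := (map_ne_zero_iff _ (IsFractionRing.injective R K)).mpr ha
  have hb' : algebraMap R K b ≠ 0 := (map_ne_zero_iff _ (IsFractionRing.injective R K)).mpr hb
  -- multiplication by `a b` identifies `(R :_K (a, b))` with `(a) ∩ (b)`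
  suffices 1 / coeSubmodule K (Ideal.span {a, b}) =
      span R {(algebraMap R K a * algebraMap R K b)⁻¹} *
        coeSubmodule K (Ideal.span {a} ⊓ Ideal.span {b}) from
    this ▸ (fg_span_singleton _).mul (Submodule.FG.map _ h)
  ext u
  rw [mem_span_singleton_mul, coeSubmodule_span, Set.image_pair, mem_one_div_span_pair]
  constructor
  · rintro ⟨hua, hub⟩
    obtain ⟨w, hw⟩ := mem_one.mp hua
    obtain ⟨v, hv⟩ := mem_one.mp hub
    have hvw : v * a = w * b := IsFractionRing.injective R K (by simp only [map_mul, hv, hw]; ring)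
    refine ⟨algebraMap R K (v * a), ⟨v * a, ⟨Ideal.mem_span_singleton'.mpr ⟨v, rfl⟩,
      Ideal.mem_span_singleton'.mpr ⟨w, hvw.symm⟩⟩, rfl⟩, ?_⟩
    rw [map_mul, hv]
    field_simp
  · rintro ⟨_, ⟨c, ⟨hca, hcb⟩, rfl⟩, rfl⟩
    obtain ⟨v, rfl⟩ := Ideal.mem_span_singleton'.mp hca
    obtain ⟨w, hw⟩ := Ideal.mem_span_singleton'.mp hcb
    refine ⟨mem_one.mpr ⟨w, ?_⟩, mem_one.mpr ⟨v, ?_⟩⟩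
    · rw [Algebra.linearMap_apply, ← hw, map_mul]
      field_simp
    · rw [Algebra.linearMap_apply, map_mul]
      field_simp

end

section

variable {R : Type*} [CommRing R] [IsDomain R] {K : Type*} [Field K] [Algebra R K]
  [IsFractionRing R K]

theorem Ideal.IsGVFree.exists_mul_eq_mul_notMem [IsIntegrallyClosed R]
    (hR : ∀ a b : R, (Ideal.span {a} ⊓ Ideal.span {b}).FG) {p : Ideal R} (hp : p.IsGVFree K)
    {a b : R} (ha : a ≠ 0) (hb : b ≠ 0) : ∃ α β : R, α * b = β * a ∧ (α ∉ p ∨ β ∉ p) := by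
  set J := Submodule.span R {algebraMap R K a, algebraMap R K b}
  have hJ : J ≤ 1 := by
    rw [Submodule.span_le, Set.insert_subset_iff, Set.singleton_subset_iff]
    exact ⟨mem_one.mpr ⟨a, rfl⟩, mem_one.mpr ⟨b, rfl⟩⟩
  have hD : (1 / J).FG := by
    simpa only [J, coeSubmodule_span, Set.image_pair] using
      fg_one_div_coeSubmodule_span_pair (K := K) (hR a b) ha hb
  have hIp := hp.not_mul_one_div_le hJ (Submodule.fg_span (Set.toFinite _)) hD
  obtain ⟨j, hj, u, hu, hju⟩ : ∃ j ∈ J, ∃ u ∈ 1 / J, j * u ∉ coeSubmodule K p := by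
    simpa only [Submodule.mul_le, not_forall, exists_prop] using hIp
  obtain ⟨r, s, rfl⟩ := Submodule.mem_span_pair.mp hj
  rw [mem_one_div_span_pair] at hu
  obtain ⟨α, hα⟩ := mem_one.mp hu.1
  obtain ⟨β, hβ⟩ := mem_one.mp hu.2
  refine ⟨α, β, IsFractionRing.injective R K ?_, ?_⟩
  · rw [map_mul, map_mul, hα, hβ]
    ring
  · by_contra! h
    refine hju ⟨r * α + s * β, p.add_mem (p.mul_mem_left r h.1) (p.mul_mem_left s h.2), ?_⟩
    rw [Algebra.linearMap_apply, map_add, map_mul, map_mul, hα, hβ, Algebra.smul_def,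
      Algebra.smul_def]
    ring

end

theorem ValuationRing.of_dvd_total_algebraMap {R : Type*} [CommRing R] (M : Submonoid R)
    {A : Type*} [CommRing A] [IsDomain A] [Algebra R A] [IsLocalization M A]
    (h : ∀ a b : R, algebraMap R A a ∣ algebraMap R A b ∨ algebraMap R A b ∣ algebraMap R A a) :
    ValuationRing A := by
  have associated : ∀ x : A, ∃ a : R, Associated x (algebraMap R A a) := fun x => by
    obtain ⟨a, s, rfl⟩ := IsLocalization.exists_mk'_eq M x
    exact ⟨a, (IsLocalization.map_units A s).unit, IsLocalization.mk'_spec A a s⟩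
  refine (ValuationRing.iff_dvd_total).mpr ⟨fun x y => ?_⟩
  obtain ⟨a, hx⟩ := associated x
  obtain ⟨b, hy⟩ := associated y
  rw [hx.dvd_iff_dvd_left, hx.dvd_iff_dvd_right, hy.dvd_iff_dvd_left, hy.dvd_iff_dvd_right]
  exact h a b

theorem valuationRing_atPrime_of_exists_mul_eq_mul {R : Type*} [CommRing R] [IsDomain R]
    {p : Ideal R} [p.IsPrime]
    (h : ∀ a b : R, a ≠ 0 → b ≠ 0 → ∃ α β : R, α * b = β * a ∧ (α ∉ p ∨ β ∉ p)) :
    ValuationRing (Localization.AtPrime p) := by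
  refine ValuationRing.of_dvd_total_algebraMap p.primeCompl fun a b => ?_
  rcases eq_or_ne a 0 with rfl | ha
  · simp
  rcases eq_or_ne b 0 with rfl | hb
  · simp
  obtain ⟨α, β, hαβ, hα | hβ⟩ := h a b ha hb
  · have hu : IsUnit (algebraMap R (Localization.AtPrime p) α) :=
      IsLocalization.map_units _ (⟨α, hα⟩ : p.primeCompl)
    refine .inl (hu.dvd_mul_right.mp ⟨algebraMap _ _ β, ?_⟩)
    rw [← map_mul, ← map_mul, mul_comm b, hαβ, mul_comm]
  · have hu : IsUnit (algebraMap R (Localization.AtPrime p) β) :=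
      IsLocalization.map_units _ (⟨β, hβ⟩ : p.primeCompl)
    refine .inr (hu.dvd_mul_right.mp ⟨algebraMap _ _ α, ?_⟩)
    rw [← map_mul, ← map_mul, mul_comm a, ← hαβ, mul_comm]

theorem exists_mul_algebraMap_eq_of_isIntegral {R : Type*} [CommRing R] [IsDomain R]
    {p : Ideal R} [p.IsPrime] [ValuationRing (Localization.AtPrime p)] {x : FractionRing R}
    (hx : IsIntegral R x) :
    ∃ a s : R, s ∉ p ∧ x * algebraMap R (FractionRing R) s = algebraMap R (FractionRing R) a := by
  obtain ⟨y, rfl⟩ := IsIntegrallyClosed.isIntegral_iff.mp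
    (hx.tower_top (A := Localization.AtPrime p))
  obtain ⟨a, s, rfl⟩ := IsLocalization.exists_mk'_eq p.primeCompl y
  refine ⟨a, s, s.2, ?_⟩
  rw [IsScalarTower.algebraMap_apply R (Localization.AtPrime p), ← map_mul,
    IsLocalization.mk'_spec, ← IsScalarTower.algebraMap_apply]

theorem IsCoherentRing.exists_valuationRing_atPrime_colon_le {R : Type} [CommRing R] [IsDomain R]
    {K : Type*} [Field K] [Algebra R K] [IsFractionRing R K] [IsIntegrallyClosed R]
    (hR : IsCoherentRing R) {x : K} (hx : x ∉ (1 : Submodule R K)) :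
    ∃ p : PrimeSpectrum R, ValuationRing (Localization.AtPrime p.asIdeal) ∧
      (1 : Submodule R K).colon {x} ≤ p.asIdeal := by
  obtain ⟨p, hp, hpGV, hxp⟩ := Ideal.exists_isPrime_isGVFree_le (Ideal.isGVFree_colon_singleton hx)
  refine ⟨⟨p, hp⟩, ?_, hxp⟩
  exact valuationRing_atPrime_of_exists_mul_eq_mul fun a b =>
    hpGV.exists_mul_eq_mul_notMem hR.inf_span_singleton_fg

/-- A coherent domain `R` is normal iff it equals, inside `Frac R`, the intersection of
those localizations `R_p` which are valuation rings. -/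
theorem stmt_14 (R : Type) [CommRing R] [IsDomain R] (hR : IsCoherentRing R) :
    IsIntegrallyClosed R ↔
      Set.range (algebraMap R (FractionRing R)) =
        ⋂ (p : PrimeSpectrum R) (_ : ValuationRing (Localization.AtPrime p.asIdeal)),
          {x : FractionRing R | ∃ a s : R, s ∉ p.asIdeal ∧
            x * algebraMap R (FractionRing R) s = algebraMap R (FractionRing R) a} := by
  constructor
  · intro hIC
    refine Set.Subset.antisymm ?_ fun x hx => ?_
    · rintro _ ⟨r, rfl⟩
      exact Set.mem_iInter₂.mpr fun p _ => ⟨r, 1, p.isPrime.one_notMem, by simp⟩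
    · by_contra hxR
      obtain ⟨p, hval, hxp⟩ :=
        hR.exists_valuationRing_atPrime_colon_le (x := x) (by simpa [mem_one] using hxR)
      obtain ⟨a, s, hs, hxs⟩ := Set.mem_iInter₂.mp hx p hval
      refine hs (hxp (mem_colon_singleton.mpr ?_))
      rw [Algebra.smul_def, mul_comm, hxs]
      exact mem_one.mpr ⟨a, rfl⟩
  · intro heq
    refine (isIntegrallyClosed_iff (FractionRing R)).mpr fun {x} hx => ?_
    change x ∈ Set.range _
    rw [heq]
    exact Set.mem_iInter₂.mpr fun p _ => exists_mul_algebraMap_eq_of_isIntegral hx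
end

section
/- Let (A, m_A) be a local ring, M a nonzero A-module with Supp(M) = {m_A}, and H an m×n matrix over A such that the induced map H_M : M^n → M^m (left multiplication) is injective. Then H admits a left inverse in the n×m matrices over A; equivalently, H exhibits A^n as a direct summand of A^m. -/
open CategoryTheory IsLocalRing Matrix

variable {A : Type} [CommRing A] [IsLocalRing A]
  {M : Type} [AddCommGroup M] [Module A M]

lemma locNilp (hM : Module.support A M = {IsLocalRing.closedPoint A})
    {f : A} (hf : f ∈ maximalIdeal A) (x : M) : ∃ k, f ^ k • x = 0 := by
  have hx : f ∈ (Submodule.span A {x}).annihilator.radical := by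
    rw [Ideal.radical_eq_sInf, Ideal.mem_sInf]
    rintro p ⟨hle, hp⟩
    have hmem : (⟨p, hp⟩ : PrimeSpectrum A) ∈ Module.support A M :=
      (Module.mem_support_iff_exists_annihilator).mpr ⟨x, hle⟩
    rw [hM, Set.mem_singleton_iff] at hmem
    have : p = maximalIdeal A := congrArg PrimeSpectrum.asIdeal hmem
    rwa [this]
  obtain ⟨k, hk⟩ := Ideal.mem_radical_iff.mp hx
  exact ⟨k, Submodule.mem_annihilator.mp hk x (Submodule.mem_span_singleton_self x)⟩

lemma kill (t : ℕ) (g : Fin t → A)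
    (hg : ∀ i (x : M), ∃ k, (g i) ^ k • x = 0) (x : M) (hx : x ≠ 0) :
    ∃ y : M, y ≠ 0 ∧ ∀ i, g i • y = 0 := by
  classical
  induction t with
  | zero => exact ⟨x, hx, fun i => i.elim0⟩
  | succ t ih =>
    obtain ⟨y, hy, hy0⟩ := ih (g ∘ Fin.succ) (fun i => hg i.succ)
    have h0 : ∃ k, (g 0) ^ k • y = 0 := hg 0 y
    have hk : (g 0) ^ (Nat.find h0) • y = 0 := Nat.find_spec h0
    have hkpos : Nat.find h0 ≠ 0 := by
      intro h
      rw [h, pow_zero, one_smul] at hk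
      exact hy hk
    obtain ⟨k', hk'⟩ : ∃ k', Nat.find h0 = k' + 1 :=
      ⟨Nat.find h0 - 1, (Nat.succ_pred_eq_of_ne_zero hkpos).symm⟩
    refine ⟨(g 0) ^ k' • y, ?_, ?_⟩
    · exact Nat.find_min h0 (by omega)
    · intro i
      rcases Fin.eq_zero_or_eq_succ i with rfl | ⟨j, rfl⟩
      · rw [smul_smul, ← pow_succ', ← hk', hk]
      · rw [smul_comm]
        have := hy0 j
        simp only [Function.comp_apply] at this
        rw [this, smul_zero]

/-- For a local ring `A`, a nonzero module `M` supported on the closed point, and a matrix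
`H` such that `H_M : Mⁿ → Mᵐ` is injective, `H` admits a left inverse over `A`. -/
theorem stmt_16 (A : Type) [CommRing A] [IsLocalRing A]
    (M : Type) [AddCommGroup M] [Module A M] [Nontrivial M]
    (hM : Module.support A M = {IsLocalRing.closedPoint A})
    (m n : ℕ) (H : Matrix (Fin m) (Fin n) A)
    (hinj : Function.Injective fun (v : Fin n → M) (i : Fin m) => ∑ j, H i j • v j) :
    ∃ H' : Matrix (Fin n) (Fin m) A, H' * H = 1 := by
  classical
  set k := ResidueField A with hkdef
  set Hb : Matrix (Fin m) (Fin n) k := H.map (residue A) with hHb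
  -- injectivity of Hb over residue field
  have hbar : LinearMap.ker Hb.mulVecLin = ⊥ := by
    rw [LinearMap.ker_eq_bot']
    intro v hv
    by_contra hvne
    obtain ⟨i0, hi0⟩ : ∃ i, v i ≠ 0 := Function.ne_iff.mp hvne
    choose w hw using fun j => residue_surjective (R := A) (v j)
    have hv0 : Hb *ᵥ v = 0 := hv
    have hmem : ∀ i, (H *ᵥ w) i ∈ maximalIdeal A := by
      intro i
      have h1 : residue A ((H *ᵥ w) i) = (Hb *ᵥ v) i := by
        simp only [Matrix.mulVec, dotProduct, map_sum, hHb, Matrix.map_apply]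
        exact Finset.sum_congr rfl fun x _ => by rw [_root_.map_mul, hw]
      rw [hv0] at h1
      exact Ideal.Quotient.eq_zero_iff_mem.mp h1
    obtain ⟨x, hx⟩ := exists_ne (0 : M)
    obtain ⟨y, hy, hy0⟩ := kill m (fun i => (H *ᵥ w) i)
      (fun i z => locNilp hM (hmem i) z) x hx
    have heq : (fun i => ∑ j, H i j • (w j • y)) = (fun i : Fin m => ∑ j, H i j • (0:M)) := by
      funext i
      simp only [smul_zero, Finset.sum_const_zero, smul_smul, ← Finset.sum_smul]
      exact hy0 i
    have := congrFun (hinj heq) i0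
    have hwu : IsUnit (w i0) := by
      rw [notMem_maximalIdeal.symm]
      intro hmw
      exact hi0 (by rw [← hw i0]; exact Ideal.Quotient.eq_zero_iff_mem.mpr hmw)
    obtain ⟨u, hu⟩ := hwu
    apply hy
    have h2 : ((↑u⁻¹ : A) * w i0) • y = 0 := by rw [mul_smul, this, smul_zero]
    rwa [← hu, Units.inv_mul, one_smul] at h2
  -- left inverse over the residue field
  obtain ⟨g, hg⟩ := LinearMap.exists_leftInverse_of_injective Hb.mulVecLin hbar
  set Bb : Matrix (Fin n) (Fin m) k := LinearMap.toMatrix' g with hBb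
  have hBbH : Bb * Hb = 1 := by
    have : LinearMap.toMatrix' (g ∘ₗ Hb.mulVecLin) = LinearMap.toMatrix' (LinearMap.id (R := k) (M := Fin n → k)) := by
      rw [hg]
    rwa [LinearMap.toMatrix'_comp, ← Matrix.toLin'_apply' Hb, LinearMap.toMatrix'_toLin',
      LinearMap.toMatrix'_id] at this
  -- lift Bb to A
  choose B hB using fun (i : Fin n) (j : Fin m) => residue_surjective (R := A) (Bb i j)
  have hmap : (Matrix.of B * H).map (residue A) = 1 := by
    have : (Matrix.of B).map (residue A) = Bb := by
      ext i j; simp [hB]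
    rw [Matrix.map_mul, this, ← hHb, hBbH]
  have hdet : IsUnit (Matrix.of B * H).det := by
    rw [← notMem_maximalIdeal]
    intro hdm
    have : residue A (Matrix.of B * H).det = 0 := Ideal.Quotient.eq_zero_iff_mem.mpr hdm
    rw [RingHom.map_det, RingHom.mapMatrix_apply, hmap, Matrix.det_one] at this
    exact one_ne_zero this
  refine ⟨(Matrix.of B * H)⁻¹ * Matrix.of B, ?_⟩
  rw [Matrix.mul_assoc, Matrix.nonsing_inv_mul _ hdet]
end
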